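/- arXiv:1712.09090 — 5 statements merged into one kernel-verified Lean document; each statement's English description precedes it below -/
import Mathlib

section
/- Let u > v be positive integers with gcd(u,v)=1. For j ∈ {0,...,u−1} and k ∈ {0,...,u−1}, define A_j = { (jv+i) mod u : 0 ≤ i < v } and, whenever k ∈ A_j, set b(j,k) = u + ⌊(jv + ((k − jv) mod u))/u⌋. Then for any j ≠ j' in {0,...,u−1} and any k ∈ A_j ∩ A_{j'}, we have b(j,k) ≠ b(j',k). -/
/-! Writing `k = (j v + i) mod u` with `i < v < u`, the residue `(k - j v) mod u` is `i`, so
`b(j, k) - u` is the quotient of `j v + i` by `u`, whose remainder is `k`. Equal values of `b`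
therefore force `j v + i = j' v + i'`, and division by `v` recovers `j = j'`. -/

theorem Int.emod_add_sub_emod_of_lt {a i u : ℤ} (hi : 0 ≤ i) (hiu : i < u) :
    ((a + i) % u - a) % u = i := by
  have : (a + i) % u - a ≡ i [ZMOD u] := by
    simpa using (Int.mod_modEq (a + i) u).sub_right a
  rw [this, Int.emod_eq_of_lt hi hiu]

theorem Nat.eq_of_mul_add_eq_mul_add {v j j' i i' : ℕ} (hi : i < v) (hi' : i' < v)
    (h : j * v + i = j' * v + i') : j = j' := by
  have hv : 0 < v := by omega
  have quot_eq (a r : ℕ) (hr : r < v) : (a * v + r) / v = a :=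
    ((Nat.div_mod_unique hv).2 ⟨by ring, hr⟩).1
  rw [← quot_eq j i hi, h, quot_eq j' i' hi']

theorem b_injective_on_column_general (u v : ℕ) (huv : v < u)
    (j j' k : ℕ) (hne : j ≠ j')
    (hkj : k ∈ (Finset.range v).image (fun i => (j * v + i) % u))
    (hkj' : k ∈ (Finset.range v).image (fun i => (j' * v + i) % u)) :
    (u : ℤ) + (((j : ℤ) * v) + (((k : ℤ) - (j : ℤ) * v) % (u : ℤ))) / (u : ℤ) ≠
      (u : ℤ) + (((j' : ℤ) * v) + (((k : ℤ) - (j' : ℤ) * v) % (u : ℤ))) / (u : ℤ) := by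
  obtain ⟨i, hi, hk⟩ := Finset.mem_image.mp hkj
  obtain ⟨i', hi', hk'⟩ := Finset.mem_image.mp hkj'
  rw [Finset.mem_range] at hi hi'
  replace hk : (k : ℤ) = (j * v + i) % u := by exact_mod_cast hk.symm
  replace hk' : (k : ℤ) = (j' * v + i') % u := by exact_mod_cast hk'.symm
  have hr : ((k : ℤ) - j * v) % u = i := by
    rw [hk]; exact Int.emod_add_sub_emod_of_lt (by positivity) (by omega)
  have hr' : ((k : ℤ) - j' * v) % u = i' := by
    rw [hk']; exact Int.emod_add_sub_emod_of_lt (by positivity) (by omega)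
  intro h
  rw [hr, hr', add_right_inj] at h
  have hx : (j * v + i : ℤ) = j' * v + i' := by
    rw [← Int.mul_ediv_add_emod (j * v + i : ℤ) u, ← Int.mul_ediv_add_emod (j' * v + i' : ℤ) u, h,
      ← hk, ← hk']
  exact hne (Nat.eq_of_mul_add_eq_mul_add hi hi' (by exact_mod_cast hx))

theorem b_injective_on_column (u v : ℕ) (hv : 0 < v) (huv : v < u)
    (hgcd : Nat.gcd u v = 1) (j j' k : ℕ) (hj : j < u) (hj' : j' < u) (hne : j ≠ j')
    (hkj : k ∈ (Finset.range v).image (fun i => (j * v + i) % u))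
    (hkj' : k ∈ (Finset.range v).image (fun i => (j' * v + i) % u)) :
    (u : ℤ) + (((j : ℤ) * v) + (((k : ℤ) - (j : ℤ) * v) % (u : ℤ))) / (u : ℤ) ≠
      (u : ℤ) + (((j' : ℤ) * v) + (((k : ℤ) - (j' : ℤ) * v) % (u : ℤ))) / (u : ℤ) :=
  b_injective_on_column_general u v huv j j' k hne hkj hkj'
end

section
/- If there exists a (K1, F, Z, S) placement delivery array and K2 is a positive integer with gcd(K1, K2) = 1 and K2 < K1, then there exists a (K1 + K2, K1·F, K1·Z, (K1 + K2)·S) placement delivery array. -/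
open Finset

/-- A `(K, F, Z, S)` placement delivery array: an `F × K` array over `{*} ∪ {0,…,S−1}`
(`none` encodes `*`) with: C1 each column has exactly `Z` stars; C2 every integer occurs;
C3 equal integer entries lie in distinct rows and columns with stars at crossings. -/
def IsPDA {K F S : ℕ} (Z : ℕ) (P : Fin F → Fin K → Option (Fin S)) : Prop :=
  (∀ k, ((Finset.univ : Finset (Fin F)).filter (fun j => P j k = none)).card = Z) ∧
  (∀ s : Fin S, ∃ j k, P j k = some s) ∧
  (∀ j₁ k₁ j₂ k₂ (s : Fin S), (j₁, k₁) ≠ (j₂, k₂) →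
    P j₁ k₁ = some s → P j₂ k₂ = some s →
    j₁ ≠ j₂ ∧ k₁ ≠ k₂ ∧ P j₁ k₂ = none ∧ P j₂ k₁ = none)

/-- Existence of a `(K, F, Z, S)` placement delivery array. -/
def PDAExists (K F Z S : ℕ) : Prop :=
  ∃ P : Fin F → Fin K → Option (Fin S), IsPDA Z P

/-- Which column of the original PDA is placed at position `(i,k)` of the new array:
columns `k < K1` are "constant" columns carrying original column `k`; columns `K1 + j`
carry original column `(i + j) mod K1`. -/
def pdaC (K1 i k : ℕ) : ℕ :=
  if k < K1 then k
  else if i + (k - K1) < K1 then i + (k - K1) else i + (k - K1) - K1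

/-- `(k - i) mod K1` for `i, k < K1`, written without `%`. -/
def pdaD (K1 i k : ℕ) : ℕ := if i ≤ k then k - i else k + K1 - i

/-- The "tag" (class label) of position `(i,k)` in the new array. -/
def pdaT (K1 K2 i k : ℕ) : ℕ :=
  if k < K1 ∧ pdaD K1 i k < K2 then K1 + pdaD K1 i k else i

lemma pdaC_lt {K1 K2 i k : ℕ} (h1 : 0 < K1) (h2 : K2 ≤ K1) (hi : i < K1)
    (hk : k < K1 + K2) : pdaC K1 i k < K1 := by
  unfold pdaC; split_ifs <;> omega

lemma pdaT_lt {K1 K2 i k : ℕ} (hi : i < K1) : pdaT K1 K2 i k < K1 + K2 := by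
  unfold pdaT pdaD; split_ifs <;> omega

/-- Within one block, equal tags at different columns give different original columns. -/
lemma pdaA {K1 K2 i k k' : ℕ} (h2 : K2 ≤ K1) (hi : i < K1) (hk : k < K1 + K2)
    (hk' : k' < K1 + K2) (hne : k ≠ k') (ht : pdaT K1 K2 i k = pdaT K1 K2 i k') :
    pdaC K1 i k ≠ pdaC K1 i k' := by
  unfold pdaT pdaD pdaC at *; split_ifs at * <;> omega

/-- Across blocks, equal tags force both columns to be distinct constant columns. -/
lemma pdaB {K1 K2 i i' k k' : ℕ} (hi : i < K1) (hi' : i' < K1) (hii : i ≠ i')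
    (ht : pdaT K1 K2 i k = pdaT K1 K2 i' k') : k < K1 ∧ k' < K1 ∧ k ≠ k' := by
  unfold pdaT pdaD at *; split_ifs at * <;> omega

/-- Coverage: every (tag, original column) pair occurs at some position. -/
lemma pdaCov {K1 K2 τ v : ℕ} (h0 : 0 < K2) (h2 : K2 ≤ K1) (hτ : τ < K1 + K2)
    (hv : v < K1) :
    ∃ i k, i < K1 ∧ k < K1 + K2 ∧ pdaT K1 K2 i k = τ ∧ pdaC K1 i k = v := by
  by_cases hτ1 : τ < K1
  · by_cases hd : pdaD K1 τ v < K2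
    · refine ⟨τ, K1 + pdaD K1 τ v, hτ1, ?_, ?_, ?_⟩ <;>
        (simp only [pdaT, pdaD, pdaC] at hd ⊢ ; split_ifs at hd ⊢ <;> omega)
    · refine ⟨τ, v, hτ1, by omega, ?_, ?_⟩ <;>
        (simp only [pdaT, pdaD, pdaC] at hd ⊢ ; split_ifs at hd ⊢ <;> omega)
  · refine ⟨if τ - K1 ≤ v then v - (τ - K1) else v + K1 - (τ - K1), v, ?_, by omega,
      ?_, ?_⟩ <;>
      (first
        | (simp only [pdaT, pdaD, pdaC] ; split_ifs <;> omega)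
        | (split_ifs <;> omega))

/-- Fin-valued version of `pdaC`. -/
def pdaCF {K1 K2 : ℕ} (h1 : 0 < K1) (h2 : K2 ≤ K1) (i : Fin K1) (k : Fin (K1 + K2)) :
    Fin K1 := ⟨pdaC K1 i.val k.val, pdaC_lt h1 h2 i.isLt k.isLt⟩

/-- Fin-valued version of `pdaT`. -/
def pdaTF {K1 K2 : ℕ} (i : Fin K1) (k : Fin (K1 + K2)) : Fin (K1 + K2) :=
  ⟨pdaT K1 K2 i.val k.val, pdaT_lt i.isLt⟩

@[simp] lemma pdaCF_val {K1 K2 : ℕ} (h1 : 0 < K1) (h2 : K2 ≤ K1) (i : Fin K1)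
    (k : Fin (K1 + K2)) : (pdaCF h1 h2 i k).val = pdaC K1 i.val k.val := rfl

@[simp] lemma pdaTF_val {K1 K2 : ℕ} (i : Fin K1) (k : Fin (K1 + K2)) :
    (pdaTF i k).val = pdaT K1 K2 i.val k.val := rfl

/-- The lifted array on product index types. -/
def pdaQ {K1 K2 F S : ℕ} (h1 : 0 < K1) (h2 : K2 ≤ K1)
    (P : Fin F → Fin K1 → Option (Fin S)) (x : Fin K1 × Fin F) (k : Fin (K1 + K2)) :
    Option (Fin (K1 + K2) × Fin S) :=
  (P x.2 (pdaCF h1 h2 x.1 k)).map (fun s => (pdaTF x.1 k, s))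

theorem recursive_coprime (K1 K2 F Z S : ℕ) (hK2 : 0 < K2) (hK2lt : K2 < K1)
    (hgcd : Nat.gcd K1 K2 = 1) (h : PDAExists K1 F Z S) :
    PDAExists (K1 + K2) (K1 * F) (K1 * Z) ((K1 + K2) * S) := by
  obtain ⟨P, hC1, hC2, hC3⟩ := h
  have hK1 : 0 < K1 := lt_trans hK2 hK2lt
  have hK2le : K2 ≤ K1 := le_of_lt hK2lt
  refine ⟨fun j' k => (pdaQ hK1 hK2le P (finProdFinEquiv.symm j') k).map finProdFinEquiv,
    ?_, ?_, ?_⟩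
  · -- C1
    intro k
    have e1 : ((Finset.univ : Finset (Fin (K1 * F))).filter
          (fun j' => (pdaQ hK1 hK2le P (finProdFinEquiv.symm j') k).map finProdFinEquiv
            = none)).card
        = ((Finset.univ : Finset (Fin K1 × Fin F)).filter
          (fun x => pdaQ hK1 hK2le P x k = none)).card := by
      apply Finset.card_equiv (finProdFinEquiv.symm : Fin (K1 * F) ≃ Fin K1 × Fin F)
      intro j'
      simp [Option.map_eq_none_iff]
    rw [e1]
    rw [Finset.card_eq_sum_card_fiberwise
      (f := Prod.fst) (t := (Finset.univ : Finset (Fin K1))) (fun x _ => mem_univ _)]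
    have e2 : ∀ i : Fin K1,
        (((Finset.univ : Finset (Fin K1 × Fin F)).filter
          (fun x => pdaQ hK1 hK2le P x k = none)).filter (fun x => x.1 = i)).card = Z := by
      intro i
      rw [← hC1 (pdaCF hK1 hK2le i k)]
      apply Finset.card_bij (fun x _ => x.2)
      · intro x hx
        simp only [Finset.mem_filter, Finset.mem_univ, true_and, pdaQ,
          Option.map_eq_none_iff] at hx ⊢
        obtain ⟨hq, hfst⟩ := hx
        rwa [hfst] at hq
      · intro x₁ hx₁ x₂ hx₂ hh
        simp only [Finset.mem_filter] at hx₁ hx₂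
        exact Prod.ext (hx₁.2.trans hx₂.2.symm) hh
      · intro j hj
        simp only [Finset.mem_filter, Finset.mem_univ, true_and] at hj
        refine ⟨(i, j), ?_, rfl⟩
        simp [pdaQ, Option.map_eq_none_iff, hj]
    rw [Finset.sum_congr rfl (fun i _ => e2 i), Finset.sum_const, Finset.card_univ,
      Fintype.card_fin, smul_eq_mul]
  · -- C2
    intro s'
    obtain ⟨j0, k0, hP⟩ := hC2 (finProdFinEquiv.symm s').2
    obtain ⟨i, k, hi, hk, ht, hc⟩ :=
      pdaCov (K1 := K1) (K2 := K2) hK2 hK2le (finProdFinEquiv.symm s').1.isLt k0.isLt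
    refine ⟨finProdFinEquiv (⟨i, hi⟩, j0), ⟨k, hk⟩, ?_⟩
    have hcf : pdaCF hK1 hK2le (⟨i, hi⟩ : Fin K1) (⟨k, hk⟩ : Fin (K1 + K2)) = k0 :=
      Fin.ext hc
    have htf : pdaTF (⟨i, hi⟩ : Fin K1) (⟨k, hk⟩ : Fin (K1 + K2))
        = (finProdFinEquiv.symm s').1 := Fin.ext ht
    show (pdaQ hK1 hK2le P (finProdFinEquiv.symm (finProdFinEquiv (⟨i, hi⟩, j0)))
        ⟨k, hk⟩).map finProdFinEquiv = some s'
    rw [Equiv.symm_apply_apply]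
    unfold pdaQ
    simp only [hcf, hP, Option.map_some, htf]
    rw [show ((finProdFinEquiv.symm s').1, (finProdFinEquiv.symm s').2)
        = finProdFinEquiv.symm s' from rfl, Equiv.apply_symm_apply]
  · -- C3
    intro j₁' k₁ j₂' k₂ s' hne h1 h2
    have hx : ∀ (j' : Fin (K1 * F)) (k : Fin (K1 + K2)),
        (pdaQ hK1 hK2le P (finProdFinEquiv.symm j') k).map finProdFinEquiv = some s' →
        P (finProdFinEquiv.symm j').2
            (pdaCF hK1 hK2le (finProdFinEquiv.symm j').1 k)
          = some (finProdFinEquiv.symm s').2 ∧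
        pdaTF (finProdFinEquiv.symm j').1 k = (finProdFinEquiv.symm s').1 := by
      intro j' k hh
      have h' : pdaQ hK1 hK2le P (finProdFinEquiv.symm j') k
          = some (finProdFinEquiv.symm s') := by
        rcases Option.map_eq_some_iff.1 hh with ⟨a, ha, hfa⟩
        rw [ha, ← hfa, Equiv.symm_apply_apply]
      unfold pdaQ at h'
      rcases Option.map_eq_some_iff.1 h' with ⟨s, hs, hpair⟩
      have h2nd := congrArg Prod.snd hpair
      have h1st := congrArg Prod.fst hpair
      simp only at h2nd h1st
      exact ⟨by rw [hs, h2nd], h1st⟩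
    obtain ⟨hP1, hT1⟩ := hx j₁' k₁ h1
    obtain ⟨hP2, hT2⟩ := hx j₂' k₂ h2
    set a := finProdFinEquiv.symm j₁' with ha
    set b := finProdFinEquiv.symm j₂' with hb
    have habj : a ≠ b → j₁' ≠ j₂' := by
      intro hab heq
      exact hab (by rw [ha, hb, heq])
    have hnone1 : P a.2 (pdaCF hK1 hK2le a.1 k₂) = none →
        (pdaQ hK1 hK2le P (finProdFinEquiv.symm j₁') k₂).map finProdFinEquiv = none := by
      intro hz
      rw [← ha]
      unfold pdaQ
      rw [hz]
      rfl
    have hnone2 : P b.2 (pdaCF hK1 hK2le b.1 k₁) = none →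
        (pdaQ hK1 hK2le P (finProdFinEquiv.symm j₂') k₁).map finProdFinEquiv = none := by
      intro hz
      rw [← hb]
      unfold pdaQ
      rw [hz]
      rfl
    by_cases hii : a.1 = b.1
    · by_cases hkk : k₁ = k₂
      · exfalso
        have hjj : a.2 ≠ b.2 := by
          intro h22
          apply hne
          have hab : a = b := Prod.ext hii h22
          have : j₁' = j₂' := by
            have := congrArg finProdFinEquiv hab
            rwa [ha, hb, Equiv.apply_symm_apply, Equiv.apply_symm_apply] at this
          exact Prod.ext this hkk
        obtain ⟨_, hcne, _, _⟩ := hC3 a.2 (pdaCF hK1 hK2le a.1 k₁) b.2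
          (pdaCF hK1 hK2le b.1 k₂) (finProdFinEquiv.symm s').2
          (fun hh => hjj (congrArg Prod.fst hh)) hP1 hP2
        exact hcne (by rw [hii, hkk])
      · -- same block, different columns
        have htt : pdaT K1 K2 (a.1 : ℕ) (k₁ : ℕ) = pdaT K1 K2 (a.1 : ℕ) (k₂ : ℕ) := by
          have h1v := congrArg Fin.val (hT1.trans hT2.symm)
          simp only [pdaTF_val] at h1v
          rwa [← hii] at h1v
        have hcne : pdaCF hK1 hK2le a.1 k₁ ≠ pdaCF hK1 hK2le a.1 k₂ := by
          intro hceq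
          exact pdaA hK2le a.1.isLt k₁.isLt k₂.isLt
            (fun hv => hkk (Fin.ext hv)) htt (congrArg Fin.val hceq)
        have hcne' : pdaCF hK1 hK2le a.1 k₁ ≠ pdaCF hK1 hK2le b.1 k₂ := by
          rw [← hii]; exact hcne
        obtain ⟨hj12, _, hs1, hs2⟩ := hC3 a.2 (pdaCF hK1 hK2le a.1 k₁) b.2
          (pdaCF hK1 hK2le b.1 k₂) (finProdFinEquiv.symm s').2
          (fun hh => hcne' (congrArg Prod.snd hh)) hP1 hP2
        refine ⟨habj (fun hab => hj12 (congrArg Prod.snd hab)), hkk, ?_, ?_⟩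
        · exact hnone1 (by rw [hii]; exact hs1)
        · exact hnone2 (by rw [← hii]; exact hs2)
    · -- different blocks
      have htt : pdaT K1 K2 (a.1 : ℕ) (k₁ : ℕ) = pdaT K1 K2 (b.1 : ℕ) (k₂ : ℕ) := by
        have h1v := congrArg Fin.val (hT1.trans hT2.symm)
        simpa only [pdaTF_val] using h1v
      obtain ⟨hk1K, hk2K, hkne⟩ := pdaB a.1.isLt b.1.isLt
        (fun hv => hii (Fin.ext hv)) htt
      have hk12 : k₁ ≠ k₂ := fun hh => hkne (congrArg Fin.val hh)
      have hcc : ∀ (i : Fin K1) (k : Fin (K1 + K2)) (hkv : (k : ℕ) < K1),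
          pdaCF hK1 hK2le i k = ⟨(k : ℕ), hkv⟩ := by
        intro i k hkv
        apply Fin.ext
        show pdaC K1 i.val k.val = (k : ℕ)
        unfold pdaC
        rw [if_pos hkv]
      have hcne' : pdaCF hK1 hK2le a.1 k₁ ≠ pdaCF hK1 hK2le b.1 k₂ := by
        rw [hcc a.1 k₁ hk1K, hcc b.1 k₂ hk2K]
        exact fun hh => hkne (Fin.mk.inj hh)
      obtain ⟨hj12, hcne2, hs1, hs2⟩ := hC3 a.2 (pdaCF hK1 hK2le a.1 k₁) b.2
        (pdaCF hK1 hK2le b.1 k₂) (finProdFinEquiv.symm s').2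
        (fun hh => hcne' (congrArg Prod.snd hh)) hP1 hP2
      refine ⟨habj (fun hab => hii (congrArg Prod.fst hab)), hk12, ?_, ?_⟩
      · apply hnone1
        rw [hcc a.1 k₂ hk2K, ← hcc b.1 k₂ hk2K]
        exact hs1
      · apply hnone2
        rw [hcc b.1 k₁ hk1K, ← hcc a.1 k₁ hk1K]
        exact hs2
end

section
/- For any positive integers K1, K2, t with t < K1 and K2 < K1, and d = gcd(K1,K2), h1 = K1/d, h2 = K2/d, there exists a (K1 + K2, h1·C(K1,t), h1·C(K1−1,t−1), (h1+h2)·C(K1,t+1)) placement delivery array, where C(n,k) denotes the binomial coefficient. Its memory ratio is Z/F = t/K1 and its rate is S/F = (1 + h2/h1)·(K1 − t)/(1 + t). -/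
open Finset

namespace RecMNAux

/-- label function: column `v`, row-copy `i` -/
def gs (h1 i v : ℕ) : ℕ :=
  if v < h1 then v
  else if i + (v - h1) < h1 then i + (v - h1) else i + (v - h1) - h1

/-- block (color) function -/
def cs (h1 h2 i v : ℕ) : ℕ :=
  if h1 ≤ v then i
  else if (if i ≤ v then v - i else h1 + v - i) < h2
    then h1 + (if i ≤ v then v - i else h1 + v - i) else i

variable {h1 h2 i i' v v' : ℕ}

lemma gs_lt (h21 : h2 ≤ h1) (hi : i < h1) (hv : v < h1 + h2) : gs h1 i v < h1 := by
  unfold gs; split_ifs <;> omega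

lemma cs_lt (hi : i < h1) (hv : v < h1 + h2) : cs h1 h2 i v < h1 + h2 := by
  unfold cs; split_ifs <;> omega

lemma cs_eq_of_lt (h : cs h1 h2 i v < h1) : cs h1 h2 i v = i := by
  unfold cs at *; split_ifs at * <;> omega

lemma cs_col_lt (hi : i < h1) (h : h1 ≤ cs h1 h2 i v) : v < h1 := by
  unfold cs at h; split_ifs at h <;> omega

lemma gs_of_lt (hv : v < h1) : gs h1 i v = v := by
  unfold gs; split_ifs <;> omega

lemma gs_consistent (hi : i < h1) (hi' : i' < h1)
    (hc : cs h1 h2 i v = cs h1 h2 i' v') : gs h1 i v' = gs h1 i' v' := by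
  rcases lt_or_ge (cs h1 h2 i v) h1 with h | h
  · have e1 := cs_eq_of_lt h
    have e2 := cs_eq_of_lt (hc ▸ h)
    have : i = i' := by omega
    rw [this]
  · have hv'1 : v' < h1 := cs_col_lt hi' (hc ▸ h)
    rw [gs_of_lt hv'1, gs_of_lt hv'1]

lemma i_eq_of_v_eq (hi : i < h1) (hi' : i' < h1)
    (hc : cs h1 h2 i v = cs h1 h2 i' v) : i = i' := by
  unfold cs at hc; split_ifs at hc <;> omega

lemma gs_ne (h21 : h2 ≤ h1) (hi : i < h1) (hi' : i' < h1) (hv : v < h1 + h2)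
    (hv' : v' < h1 + h2) (hc : cs h1 h2 i v = cs h1 h2 i' v') (hvv : v ≠ v') :
    gs h1 i v ≠ gs h1 i' v' := by
  rcases lt_or_ge (cs h1 h2 i v) h1 with h | h
  · have e1 := cs_eq_of_lt h
    have e2 := cs_eq_of_lt (hc ▸ h)
    intro heq
    unfold gs cs at *
    split_ifs at * <;> omega
  · have hv1 : v < h1 := cs_col_lt hi h
    have hv2 : v' < h1 := cs_col_lt hi' (hc ▸ h)
    rw [gs_of_lt hv1, gs_of_lt hv2]; exact hvv

lemma cs_gs_surj (h01 : 0 < h1) (h02 : 0 < h2) (h21 : h2 ≤ h1) {m x : ℕ}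
    (hm : m < h1 + h2) (hx : x < h1) :
    ∃ i v, i < h1 ∧ v < h1 + h2 ∧ cs h1 h2 i v = m ∧ gs h1 i v = x := by
  rcases lt_or_ge m h1 with hm1 | hm1
  · rcases le_or_gt m x with hmx | hmx
    · rcases lt_or_ge (x - m) h2 with h | h
      · exact ⟨m, h1 + (x - m), hm1, by omega, by unfold cs; split_ifs <;> omega,
          by unfold gs; split_ifs <;> omega⟩
      · exact ⟨m, x, hm1, by omega, by unfold cs; split_ifs <;> omega,
          by unfold gs; split_ifs <;> omega⟩
    · rcases lt_or_ge (h1 + x - m) h2 with h | h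
      · exact ⟨m, h1 + (h1 + x - m), hm1, by omega, by unfold cs; split_ifs <;> omega,
          by unfold gs; split_ifs <;> omega⟩
      · exact ⟨m, x, hm1, by omega, by unfold cs; split_ifs <;> omega,
          by unfold gs; split_ifs <;> omega⟩
  · rcases le_or_gt (m - h1) x with hjx | hjx
    · exact ⟨x - (m - h1), x, by omega, by omega, by unfold cs; split_ifs <;> omega,
        by unfold gs; split_ifs <;> omega⟩
    · exact ⟨h1 + x - (m - h1), x, by omega, by omega, by unfold cs; split_ifs <;> omega,
        by unfold gs; split_ifs <;> omega⟩


lemma count_mem_subsets {G : Type*} [DecidableEq G] [Fintype G] (x : G) {t : ℕ} (ht : 0 < t) :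
    ((Finset.univ : Finset {T : Finset G // T.card = t}).filter fun T => x ∈ T.1).card
      = (Fintype.card G - 1).choose (t - 1) := by
  have hh : ((univ.erase x).powersetCard (t-1)).card = (Fintype.card G - 1).choose (t-1) := by
    rw [Finset.card_powersetCard, card_erase_of_mem (mem_univ x), card_univ]
  rw [← hh]
  refine Finset.card_bij' (fun T _ => T.1.erase x)
    (fun A hA => ⟨insert x A, ?_⟩) ?_ ?_ ?_ ?_
  · rw [mem_powersetCard] at hA
    rw [card_insert_of_notMem (fun hxA => (notMem_erase x univ) (hA.1 hxA)), hA.2]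
    omega
  · intro T hT
    rw [mem_filter] at hT
    rw [mem_powersetCard]
    exact ⟨erase_subset_erase x (subset_univ _), by rw [card_erase_of_mem hT.2, T.2]⟩
  · intro A hA
    exact mem_filter.2 ⟨mem_univ _, mem_insert_self _ _⟩
  · intro T hT
    rw [mem_filter] at hT
    exact Subtype.ext (insert_erase hT.2)
  · intro A hA
    rw [mem_powersetCard] at hA
    exact erase_insert (fun hxA => (notMem_erase x univ) (hA.1 hxA))

lemma pdaExists_of_card {R C Y : Type*} [Fintype R] [Fintype C] [Fintype Y]
    [DecidableEq R] [DecidableEq C] [DecidableEq Y]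
    {K F Z S : ℕ} (hR : Fintype.card R = F) (hC : Fintype.card C = K)
    (hY : Fintype.card Y = S) (P : R → C → Option Y)
    (hc1 : ∀ c, (univ.filter fun r => P r c = none).card = Z)
    (hc2 : ∀ y, ∃ r c, P r c = some y)
    (hc3 : ∀ r₁ c₁ r₂ c₂ y, ¬(r₁ = r₂ ∧ c₁ = c₂) → P r₁ c₁ = some y → P r₂ c₂ = some y →
        r₁ ≠ r₂ ∧ c₁ ≠ c₂ ∧ P r₁ c₂ = none ∧ P r₂ c₁ = none) :
    PDAExists K F Z S := by
  let eR := Fintype.equivFinOfCardEq hR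
  let eC := Fintype.equivFinOfCardEq hC
  let eY := Fintype.equivFinOfCardEq hY
  refine ⟨fun j k => (P (eR.symm j) (eC.symm k)).map eY, ?_, ?_, ?_⟩
  · intro k
    rw [← hc1 (eC.symm k)]
    refine Finset.card_bij' (fun j _ => eR.symm j) (fun r _ => eR r) ?_ ?_ ?_ ?_
    · intro j hj
      simp only [mem_filter, mem_univ, true_and, Option.map_eq_none_iff] at hj ⊢
      exact hj
    · intro r hr
      simp only [mem_filter, mem_univ, true_and, Option.map_eq_none_iff] at hr ⊢
      simpa using hr
    · intro j _; simp
    · intro r _; simp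
  · intro y
    obtain ⟨r, c, h⟩ := hc2 (eY.symm y)
    exact ⟨eR r, eC c, by simp [h]⟩
  · intro j₁ k₁ j₂ k₂ y hne hP1 hP2
    rw [Option.map_eq_some_iff] at hP1 hP2
    obtain ⟨a₁, ha₁, hy₁⟩ := hP1
    obtain ⟨a₂, ha₂, hy₂⟩ := hP2
    have ha₁' : P (eR.symm j₁) (eC.symm k₁) = some (eY.symm y) := by
      rw [ha₁, ← hy₁]; simp
    have ha₂' : P (eR.symm j₂) (eC.symm k₂) = some (eY.symm y) := by
      rw [ha₂, ← hy₂]; simp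
    have key := hc3 _ _ _ _ _ (fun hh => hne (by
      have h1 : j₁ = j₂ := by
        have := congrArg eR hh.1; simpa using this
      have h2 : k₁ = k₂ := by
        have := congrArg eC hh.2; simpa using this
      rw [h1, h2])) ha₁' ha₂'
    refine ⟨fun h => key.1 (by rw [h]), fun h => key.2.1 (by rw [h]), ?_, ?_⟩
    · simp [key.2.2.1]
    · simp [key.2.2.2]

section Main

variable (h1 h2 d t : ℕ)

abbrev GT := Fin h1 × Fin d
abbrev RowT := Fin h1 × {T : Finset (GT h1 d) // T.card = t}
abbrev ColT := Fin (h1 + h2) × Fin d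
abbrev SymT := Fin (h1 + h2) × {U : Finset (GT h1 d) // U.card = t + 1}

variable {h1 h2 d}

def gfull (h21 : h2 ≤ h1) (i : Fin h1) (c : ColT h1 h2 d) : GT h1 d :=
  (⟨gs h1 i c.1, gs_lt h21 i.isLt c.1.isLt⟩, c.2)

def cfull (i : Fin h1) (c : ColT h1 h2 d) : Fin (h1 + h2) :=
  ⟨cs h1 h2 i c.1, cs_lt i.isLt c.1.isLt⟩

def P0 (h21 : h2 ≤ h1) (t : ℕ) (r : RowT h1 d t) (c : ColT h1 h2 d) :
    Option (SymT h1 h2 d t) :=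
  if hmem : gfull h21 r.1 c ∈ r.2.1 then none
  else some (cfull r.1 c, ⟨insert (gfull h21 r.1 c) r.2.1, by
    rw [card_insert_of_notMem hmem, r.2.2]⟩)

lemma P0_eq_none (h21 : h2 ≤ h1) (t : ℕ) (r : RowT h1 d t) (c : ColT h1 h2 d) :
    P0 h21 t r c = none ↔ gfull h21 r.1 c ∈ r.2.1 := by
  rw [P0]; split_ifs with h <;> simp [h]

lemma pda_main (h01 : 0 < h1) (h02 : 0 < h2) (h0d : 0 < d) (h21 : h2 ≤ h1) (ht : 0 < t) :
    PDAExists ((h1 + h2) * d) (h1 * (h1 * d).choose t)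
      (h1 * (h1 * d - 1).choose (t - 1)) ((h1 + h2) * (h1 * d).choose (t + 1)) := by
  classical
  have hcardG : Fintype.card (GT h1 d) = h1 * d := by simp
  apply pdaExists_of_card (R := RowT h1 d t) (C := ColT h1 h2 d) (Y := SymT h1 h2 d t)
    (P := P0 h21 t)
  -- cards
  · simp [RowT, Fintype.card_finset_len, hcardG]
  · simp [ColT, mul_comm]
  · simp [SymT, Fintype.card_finset_len, hcardG]
  -- C1
  · intro c
    rw [Finset.card_eq_sum_card_fiberwise
      (f := fun r : RowT h1 d t => r.1) (t := (univ : Finset (Fin h1)))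
      (fun _ _ => mem_univ _)]
    have hfib : ∀ i : Fin h1,
        ((univ.filter fun r : RowT h1 d t => P0 h21 t r c = none).filter
          fun r => r.1 = i).card = (h1 * d - 1).choose (t - 1) := by
      intro i
      rw [← hcardG, ← count_mem_subsets (gfull h21 i c) ht]
      refine Finset.card_bij' (fun r _ => r.2) (fun T _ => (i, T)) ?_ ?_ ?_ ?_
      · intro r hr
        simp only [mem_filter, mem_univ, true_and] at hr ⊢
        obtain ⟨hr1, hr2⟩ := hr
        rw [P0_eq_none] at hr1
        rwa [← hr2]
      · intro T hT
        simp only [mem_filter, mem_univ, true_and] at hT ⊢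
        exact ⟨(P0_eq_none h21 t (i, T) c).2 hT, trivial⟩
      · intro r hr
        simp only [mem_filter] at hr
        obtain ⟨r1, r2⟩ := r
        simp only at hr ⊢
        rw [hr.2]
      · intro T hT
        rfl
    rw [Finset.sum_congr rfl (fun i _ => hfib i), Finset.sum_const, card_univ,
      Fintype.card_fin, smul_eq_mul]
  -- C2
  · rintro ⟨m, U⟩
    have hUne : U.1.Nonempty := card_pos.1 (by rw [U.2]; omega)
    obtain ⟨x, hx⟩ := hUne
    obtain ⟨x1, δ⟩ := x
    obtain ⟨i, v, hi, hv, hcs, hgs⟩ := cs_gs_surj h01 h02 h21 m.isLt x1.isLt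
    refine ⟨(⟨i, hi⟩, ⟨U.1.erase (x1, δ), by simp [card_erase_of_mem hx, U.2]⟩),
      (⟨v, hv⟩, δ), ?_⟩
    have hg : gfull h21 (⟨i, hi⟩ : Fin h1) ((⟨v, hv⟩, δ) : ColT h1 h2 d) = (x1, δ) := by
      unfold gfull
      exact Prod.ext (Fin.ext hgs) rfl
    have hnotmem : gfull h21 (⟨i, hi⟩ : Fin h1) ((⟨v, hv⟩, δ) : ColT h1 h2 d)
        ∉ U.1.erase (x1, δ) := by rw [hg]; exact notMem_erase _ _
    rw [P0, dif_neg hnotmem]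
    congr 1
    refine Prod.ext (Fin.ext hcs) (Subtype.ext ?_)
    show insert (gfull h21 (⟨i, hi⟩ : Fin h1) ((⟨v, hv⟩, δ) : ColT h1 h2 d))
      ((U.1).erase (x1, δ)) = U.1
    rw [hg]
    exact insert_erase hx
  -- C3
  · rintro ⟨i₁, T₁⟩ ⟨v₁, δ₁⟩ ⟨i₂, T₂⟩ ⟨v₂, δ₂⟩ ⟨m, U⟩ hne hP1 hP2
    rw [P0] at hP1 hP2
    split_ifs at hP1 hP2 with hm1 hm2
    injection hP1 with hP1'
    injection hP2 with hP2'
    have hcf1 : cfull i₁ ((v₁, δ₁) : ColT h1 h2 d) = m := congrArg Prod.fst hP1'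
    have hcf2 : cfull i₂ ((v₂, δ₂) : ColT h1 h2 d) = m := congrArg Prod.fst hP2'
    have hU1 : insert (gfull h21 i₁ (v₁, δ₁)) T₁.1 = U.1 :=
      congrArg (fun p => (p.2 : {T : Finset (GT h1 d) // T.card = t + 1}).1) hP1'
    have hU2 : insert (gfull h21 i₂ (v₂, δ₂)) T₂.1 = U.1 :=
      congrArg (fun p => (p.2 : {T : Finset (GT h1 d) // T.card = t + 1}).1) hP2'
    have hceq : cs h1 h2 (i₁ : ℕ) (v₁ : ℕ) = cs h1 h2 (i₂ : ℕ) (v₂ : ℕ) :=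
      congrArg Fin.val (hcf1.trans hcf2.symm)
    have hUU : insert (gfull h21 i₁ (v₁, δ₁)) T₁.1 = insert (gfull h21 i₂ (v₂, δ₂)) T₂.1 :=
      hU1.trans hU2.symm
    have hxc : gfull h21 i₁ (v₁, δ₁) ≠ gfull h21 i₂ (v₂, δ₂) ∧
        ((v₁, δ₁) : ColT h1 h2 d) ≠ (v₂, δ₂) := by
      by_cases hiv : i₁ = i₂ ∧ v₁ = v₂
      · have hδ : δ₁ ≠ δ₂ := by
          intro hδe
          apply hne
          have hxe : gfull h21 i₁ ((v₁, δ₁) : ColT h1 h2 d) = gfull h21 i₂ (v₂, δ₂) := by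
            rw [hiv.1, hiv.2, hδe]
          have hTT : T₁ = T₂ := by
            apply Subtype.ext
            rw [← erase_insert hm1, ← erase_insert hm2, hUU, hxe]
          exact ⟨by rw [hiv.1, hTT], by rw [hiv.2, hδe]⟩
        constructor
        · intro hxe
          exact hδ (congrArg Prod.snd hxe)
        · intro hce
          exact hδ (congrArg Prod.snd hce)
      · have hvv : (v₁ : ℕ) ≠ (v₂ : ℕ) := by
          intro hveq
          apply hiv
          have hv12 : v₁ = v₂ := Fin.ext hveq
          refine ⟨Fin.ext ?_, hv12⟩
          exact i_eq_of_v_eq i₁.isLt i₂.isLt (by rw [hceq, hveq])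
        have hgs' : gs h1 (i₁ : ℕ) (v₁ : ℕ) ≠ gs h1 (i₂ : ℕ) (v₂ : ℕ) :=
          gs_ne h21 i₁.isLt i₂.isLt v₁.isLt v₂.isLt hceq hvv
        constructor
        · intro hxe
          exact hgs' (congrArg (fun p => ((p.1 : Fin h1) : ℕ)) hxe)
        · intro hce
          exact hvv (congrArg (fun p => ((p.1 : Fin (h1 + h2)) : ℕ)) hce)
    obtain ⟨hx12, hcne⟩ := hxc
    have hx2T1 : gfull h21 i₂ ((v₂, δ₂) : ColT h1 h2 d) ∈ T₁.1 := by
      have hmem : gfull h21 i₂ ((v₂, δ₂) : ColT h1 h2 d) ∈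
          insert (gfull h21 i₁ (v₁, δ₁)) T₁.1 := by
        rw [hUU]; exact mem_insert_self _ _
      rcases mem_insert.1 hmem with h | h
      · exact absurd h.symm hx12
      · exact h
    have hx1T2 : gfull h21 i₁ ((v₁, δ₁) : ColT h1 h2 d) ∈ T₂.1 := by
      have hmem : gfull h21 i₁ ((v₁, δ₁) : ColT h1 h2 d) ∈
          insert (gfull h21 i₂ (v₂, δ₂)) T₂.1 := by
        rw [← hUU]; exact mem_insert_self _ _
      rcases mem_insert.1 hmem with h | h
      · exact absurd h hx12
      · exact h
    have hTT : T₁ ≠ T₂ := by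
      intro h
      exact hm2 (h ▸ hx2T1)
    refine ⟨?_, hcne, ?_, ?_⟩
    · intro h
      exact hTT (congrArg Prod.snd h)
    · rw [P0_eq_none]
      have hgc : gfull h21 i₁ ((v₂, δ₂) : ColT h1 h2 d) = gfull h21 i₂ (v₂, δ₂) := by
        unfold gfull
        exact Prod.ext (Fin.ext (gs_consistent i₁.isLt i₂.isLt hceq)) rfl
      rw [hgc]
      exact hx2T1
    · rw [P0_eq_none]
      have hgc : gfull h21 i₂ ((v₁, δ₁) : ColT h1 h2 d) = gfull h21 i₁ (v₁, δ₁) := by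
        unfold gfull
        exact Prod.ext (Fin.ext (gs_consistent i₂.isLt i₁.isLt hceq.symm)) rfl
      rw [hgc]
      exact hx1T2

end Main
end RecMNAux

theorem recursive_MN (K1 K2 t d h1 h2 : ℕ) (hK1 : 0 < K1) (hK2 : 0 < K2) (ht : 0 < t)
    (htK : t < K1) (hKK : K2 < K1)
    (hd : d = Nat.gcd K1 K2) (hh1 : h1 = K1 / d) (hh2 : h2 = K2 / d) :
    PDAExists (K1 + K2) (h1 * Nat.choose K1 t) (h1 * Nat.choose (K1 - 1) (t - 1))
      ((h1 + h2) * Nat.choose K1 (t + 1)) ∧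
    ((h1 * Nat.choose (K1 - 1) (t - 1) : ℚ) / (h1 * Nat.choose K1 t : ℕ) =
      (t : ℚ) / (K1 : ℚ)) ∧
    (((h1 + h2) * Nat.choose K1 (t + 1) : ℚ) / (h1 * Nat.choose K1 t : ℕ) =
      (1 + (h2 : ℚ) / (h1 : ℚ)) * ((K1 : ℚ) - (t : ℚ)) / (1 + (t : ℚ))) := by
  have hdvd1 : d ∣ K1 := hd ▸ Nat.gcd_dvd_left K1 K2
  have hdvd2 : d ∣ K2 := hd ▸ Nat.gcd_dvd_right K1 K2
  have h1d : h1 * d = K1 := by rw [hh1]; exact Nat.div_mul_cancel hdvd1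
  have h2d : h2 * d = K2 := by rw [hh2]; exact Nat.div_mul_cancel hdvd2
  have h0d : 0 < d := by
    rcases Nat.eq_zero_or_pos d with h | h
    · subst h; simp at h1d; omega
    · exact h
  have h01 : 0 < h1 := by
    rcases Nat.eq_zero_or_pos h1 with h | h
    · subst h; simp at h1d; omega
    · exact h
  have h02 : 0 < h2 := by
    rcases Nat.eq_zero_or_pos h2 with h | h
    · subst h; simp at h2d; omega
    · exact h
  have h21 : h2 < h1 := by
    by_contra hle
    push_neg at hle
    have := Nat.mul_le_mul_right d hle
    omega
  have hB : 0 < K1.choose t := Nat.choose_pos (le_of_lt htK)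
  have hBne : ((K1.choose t : ℕ) : ℚ) ≠ 0 := Nat.cast_ne_zero.2 (by omega)
  have hh1ne : (h1 : ℚ) ≠ 0 := Nat.cast_ne_zero.2 (by omega)
  have hK1ne : (K1 : ℚ) ≠ 0 := Nat.cast_ne_zero.2 (by omega)
  refine ⟨?_, ?_, ?_⟩
  · have hmain := RecMNAux.pda_main (t := t) h01 h02 h0d (le_of_lt h21) ht
    have e1 : (h1 + h2) * d = K1 + K2 := by rw [add_mul, h1d, h2d]
    rw [e1, h1d] at hmain
    exact hmain
  · have key1 : (K1 : ℚ) * (((K1 - 1).choose (t - 1) : ℕ) : ℚ)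
        = ((K1.choose t : ℕ) : ℚ) * (t : ℚ) := by
      have hnat : K1 * (K1 - 1).choose (t - 1) = K1.choose t * t := by
        have h := Nat.add_one_mul_choose_eq (K1 - 1) (t - 1)
        have e1 : K1 - 1 + 1 = K1 := by omega
        have e2 : t - 1 + 1 = t := by omega
        simpa [Nat.succ_eq_add_one, e1, e2] using h
      exact_mod_cast hnat
    push_cast
    rw [div_eq_div_iff (by positivity) (by positivity)]
    linear_combination (h1 : ℚ) * key1
  · have key2 : ((K1.choose (t + 1) : ℕ) : ℚ) * ((t : ℚ) + 1)
        = ((K1.choose t : ℕ) : ℚ) * ((K1 : ℚ) - (t : ℚ)) := by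
      have hnat : K1.choose (t + 1) * (t + 1) = K1.choose t * (K1 - t) :=
        Nat.choose_succ_right_eq K1 t
      have := congrArg (fun n : ℕ => (n : ℚ)) hnat
      push_cast [Nat.cast_sub (le_of_lt htK)] at this
      linarith [this]
    have htne : (1 : ℚ) + (t : ℚ) ≠ 0 := by positivity
    push_cast
    rw [div_eq_div_iff (by positivity) (by positivity)]
    field_simp
    linear_combination key2
end

section
/- For any positive integers q, z, m, K2 with q ≥ 2, z < q, K2 ≤ (m+1)q, and with h1 = (m+1)q/gcd((m+1)q, K2), h2 = K2/gcd((m+1)q, K2), there exists an ((m+1)q + K2, h1·⌊(q−1)/(q−z)⌋·q^m, h1·z·⌊(q−1)/(q−z)⌋·q^{m−1}, (h1+h2)·(q−z)·q^m) placement delivery array. -/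
open Finset

/-- A PDA over general index types. -/
def GPDA {R C Sym : Type*} [Fintype R] [DecidableEq Sym] (Z : ℕ)
    (P : R → C → Option Sym) : Prop :=
  (∀ k, ((Finset.univ : Finset R).filter (fun j => P j k = none)).card = Z) ∧
  (∀ s : Sym, ∃ j k, P j k = some s) ∧
  (∀ j₁ k₁ j₂ k₂ (s : Sym), (j₁, k₁) ≠ (j₂, k₂) →
    P j₁ k₁ = some s → P j₂ k₂ = some s →
    j₁ ≠ j₂ ∧ k₁ ≠ k₂ ∧ P j₁ k₂ = none ∧ P j₂ k₁ = none)

lemma gpda_transport {R C Sym R' C' Sym' : Type*} [Fintype R] [DecidableEq Sym]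
    [Fintype R'] [DecidableEq Sym']
    {Z : ℕ} {P : R → C → Option Sym} (h : GPDA Z P) (eR : R' ≃ R) (eC : C' ≃ C)
    (eS : Sym ≃ Sym') :
    GPDA Z (fun j k => (P (eR j) (eC k)).map eS) := by
  obtain ⟨h1, h2, h3⟩ := h
  refine ⟨fun k => ?_, fun s => ?_, ?_⟩
  · rw [← h1 (eC k)]
    apply Finset.card_bij (fun a _ => eR a)
    · intro a ha
      simp only [mem_filter, mem_univ, true_and, Option.map_eq_none_iff] at *
      exact ha
    · intro a _ b _ hab; exact eR.injective hab
    · intro b hb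
      refine ⟨eR.symm b, ?_, by simp⟩
      simp only [mem_filter, mem_univ, true_and, Option.map_eq_none_iff] at *
      simpa using hb
  · obtain ⟨j, k, hjk⟩ := h2 (eS.symm s)
    exact ⟨eR.symm j, eC.symm k, by simp [hjk]⟩
  · intro j₁ k₁ j₂ k₂ s hne hP1 hP2
    rw [Option.map_eq_some_iff] at hP1 hP2
    obtain ⟨s₁, hs₁, hs₁'⟩ := hP1
    obtain ⟨s₂, hs₂, hs₂'⟩ := hP2
    have hss : s₁ = s₂ := eS.injective (hs₁'.trans hs₂'.symm)
    subst hss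
    have hne' : ((eR j₁, eC k₁) : R × C) ≠ (eR j₂, eC k₂) := by
      intro hcontra
      apply hne
      have h1' := congrArg Prod.fst hcontra
      have h2' := congrArg Prod.snd hcontra
      simp only at h1' h2'
      rw [eR.injective h1', eC.injective h2']
    obtain ⟨hj, hk, hc1, hc2⟩ := h3 _ _ _ _ s₁ hne' hs₁ hs₂
    refine ⟨fun hcontra => hj (by rw [hcontra]), fun hcontra => hk (by rw [hcontra]), ?_, ?_⟩
    · simp [hc1]
    · simp [hc2]

lemma PDAExists.of_gpda {R C Sym : Type*} [Fintype R] [Fintype C] [Fintype Sym]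
    [DecidableEq Sym] {Z : ℕ} (P : R → C → Option Sym) (h : GPDA Z P) {K F S : ℕ}
    (hF : Fintype.card R = F) (hK : Fintype.card C = K) (hS : Fintype.card Sym = S) :
    PDAExists K F Z S := by
  refine ⟨fun j k => (P ((Fintype.equivFinOfCardEq hF).symm j)
    ((Fintype.equivFinOfCardEq hK).symm k)).map (Fintype.equivFinOfCardEq hS), ?_⟩
  exact gpda_transport h (Fintype.equivFinOfCardEq hF).symm (Fintype.equivFinOfCardEq hK).symm
    (Fintype.equivFinOfCardEq hS)

section Counting

variable {α β H : Type*}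

lemma card_filter_comp [Fintype α] [Fintype H] [DecidableEq H] (L : α → H) (c : ℕ)
    (hL : ∀ w, (univ.filter fun a => L a = w).card = c) (p : H → Prop) [DecidablePred p] :
    (univ.filter fun a => p (L a)).card = c * (univ.filter p).card := by
  rw [Finset.card_eq_sum_card_fiberwise
    (f := L) (t := univ.filter p) (fun x hx => by simp_all)]
  rw [Finset.sum_congr rfl (fun w hw => ?_), Finset.sum_const, smul_eq_mul, mul_comm]
  rw [← hL w]
  congr 1
  ext a
  simp only [mem_filter, mem_univ, true_and] at *
  constructor
  · rintro ⟨_, h2⟩; exact h2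
  · intro h2; rw [h2]; exact ⟨hw, rfl⟩

lemma card_filter_prod [Fintype α] [Fintype β] [DecidableEq α]
    (p : α → β → Prop) [∀ a, DecidablePred (p a)] :
    (univ.filter (fun x : α × β => p x.1 x.2)).card = ∑ a : α, (univ.filter (p a)).card := by
  rw [Finset.card_eq_sum_card_fiberwise (f := Prod.fst) (t := univ) (fun x _ => mem_univ _)]
  refine Finset.sum_congr rfl fun a _ => ?_
  apply Finset.card_bij (fun x _ => x.2)
  · intro x hx
    simp only [mem_filter, mem_univ, true_and] at *
    obtain ⟨hp, hfst⟩ := hx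
    rwa [← hfst]
  · intro x hx y hy hxy
    simp only [mem_filter, mem_univ, true_and] at hx hy
    exact Prod.ext (hx.2.trans hy.2.symm) hxy
  · intro bb hbb
    simp only [mem_filter, mem_univ, true_and] at *
    exact ⟨(a, bb), ⟨hbb, rfl⟩, rfl⟩

lemma fiber_card_eq [Fintype α] [Fintype H] [DecidableEq H] [AddCommGroup H] (L : α → H)
    (hshift : ∀ c : H, ∃ T : α ≃ α, ∀ a, L (T a) = L a + c) (c : ℕ)
    (hH : 0 < Fintype.card H)
    (hc : Fintype.card α = Fintype.card H * c) (w : H) :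
    (univ.filter fun a => L a = w).card = c := by
  have hconst : ∀ w' : H, (univ.filter fun a => L a = w').card
      = (univ.filter fun a => L a = w).card := by
    intro w'
    obtain ⟨T, hT⟩ := hshift (w - w')
    apply Finset.card_bij (fun a _ => T a)
    · intro a ha
      simp only [mem_filter, mem_univ, true_and] at *
      have : L (T a) = L a + (w - w') := hT a
      rw [this, ha]; abel
    · intro a _ b _ hab; exact T.injective hab
    · intro bb hbb
      simp only [mem_filter, mem_univ, true_and] at *
      refine ⟨T.symm bb, ?_, by simp⟩
      have h2 : L (T (T.symm bb)) = L (T.symm bb) + (w - w') := hT (T.symm bb)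
      simp only [Equiv.apply_symm_apply, hbb] at h2
      have h3 : L (T.symm bb) = w - (w - w') := by
        rw [eq_sub_iff_add_eq]; exact h2.symm
      rw [h3]; abel
  have htot : Fintype.card α = ∑ w' : H, (univ.filter fun a => L a = w').card := by
    rw [← Finset.card_univ]
    exact Finset.card_eq_sum_card_fiberwise (f := L) (t := univ) (fun x _ => mem_univ _)
  rw [Finset.sum_congr rfl (fun w' _ => hconst w'), Finset.sum_const, smul_eq_mul,
    Finset.card_univ, hc] at htot
  exact (Nat.eq_of_mul_eq_mul_left hH htot.symm)

end Counting

section ZModCount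

lemma zmod_val_filter_card (q : ℕ) [NeZero q] (p : ℕ → Prop) [DecidablePred p] :
    (univ.filter fun w : ZMod q => p w.val).card = ((Finset.range q).filter p).card := by
  apply Finset.card_bij (fun w _ => w.val)
  · intro w hw
    simp only [mem_filter, mem_univ, true_and, mem_range] at *
    exact ⟨ZMod.val_lt w, hw⟩
  · intro a _ b _ hab; exact ZMod.val_injective q hab
  · intro x hx
    simp only [mem_filter, mem_univ, true_and, mem_range] at hx
    exact ⟨(x : ZMod q), by simp [ZMod.val_cast_of_lt hx.1, hx.2], ZMod.val_cast_of_lt hx.1⟩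

lemma window_card_pos (q : ℕ) [NeZero q] (a bb : ℕ) (h : a + bb < q) :
    (univ.filter fun w : ZMod q => a + 1 ≤ w.val ∧ w.val ≤ a + bb).card = bb := by
  rw [zmod_val_filter_card q (fun d => a + 1 ≤ d ∧ d ≤ a + bb)]
  have he : (Finset.range q).filter (fun d => a + 1 ≤ d ∧ d ≤ a + bb)
      = Finset.Icc (a+1) (a+bb) := by
    ext d; simp only [mem_filter, mem_range, Finset.mem_Icc]; omega
  rw [he, Nat.card_Icc]; omega

lemma window_card_neg (q : ℕ) [NeZero q] (a bb : ℕ) (h : a + bb < q) :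
    (univ.filter fun w : ZMod q => ¬(a + 1 ≤ w.val ∧ w.val ≤ a + bb)).card = q - bb := by
  have htot := Finset.card_filter_add_card_filter_not
    (s := (univ : Finset (ZMod q))) (p := fun w : ZMod q => a + 1 ≤ w.val ∧ w.val ≤ a + bb)
  rw [window_card_pos q a bb h] at htot
  have hcard : (univ : Finset (ZMod q)).card = q := by
    rw [Finset.card_univ, ZMod.card]
  omega

lemma val_cast_sub_cast (q : ℕ) [NeZero q] (X Y : ℕ) (hY : Y ≤ q) :
    ((X : ZMod q) - (Y : ZMod q)).val = (X + (q - Y)) % q := by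
  have h1 : ((X + (q - Y) : ℕ) : ZMod q) = (X : ZMod q) - Y := by
    rw [Nat.cast_add, Nat.cast_sub hY, ZMod.natCast_self]
    ring
  rw [← h1, ZMod.val_natCast]

lemma nat_mod_three (a q : ℕ) (h0 : 0 < q) (h : a < 3*q) :
    a % q = if a < q then a else if a < 2*q then a - q else a - 2*q := by
  split_ifs with h1 h2
  · exact Nat.mod_eq_of_lt h1
  · rw [Nat.mod_eq_sub_mod (by omega)]; exact Nat.mod_eq_of_lt (by omega)
  · rw [Nat.mod_eq_sub_mod (by omega), Nat.mod_eq_sub_mod (by omega)]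
    have he : a - q - q = a - 2*q := by omega
    rw [he]; exact Nat.mod_eq_of_lt (by omega)

end ZModCount

section Base

/-- The base PDA.  Rows `(δ, f)`, columns `(some i, j)` (type 1) or `(none, j)` (type 2),
symbols `(e, u)`. -/
def baseP (q b t n : ℕ) :
    (Fin t × (Fin (n+1) → ZMod q)) → (Option (Fin (n+1)) × ZMod q) →
      Option ((Fin (n+1) → ZMod q) × Fin b)
  | (δ, f), (some i, j) =>
    if h : (t-1)*b + 1 ≤ (j - f i).val ∧ (j - f i).val ≤ (t-1)*b + b then
      some (Function.update f i (j - ((δ.val * b : ℕ) : ZMod q)),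
        ⟨(j - f i).val - ((t-1)*b + 1), by omega⟩)
    else none
  | (δ, f), (none, j) =>
    if h : δ.val * b + 1 ≤ ((∑ k, f k) - j).val ∧ ((∑ k, f k) - j).val ≤ δ.val * b + b then
      some (f, ⟨((∑ k, f k) - j).val - (δ.val * b + 1), by omega⟩)
    else none

lemma baseP_none1 {q b t n : ℕ} (δ : Fin t) (f : Fin (n+1) → ZMod q) (i : Fin (n+1))
    (j : ZMod q) :
    baseP q b t n (δ, f) (some i, j) = none ↔
      ¬((t-1)*b + 1 ≤ (j - f i).val ∧ (j - f i).val ≤ (t-1)*b + b) := by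
  rw [baseP]
  split_ifs with h <;> simp [h] <;> omega

lemma baseP_none2 {q b t n : ℕ} (δ : Fin t) (f : Fin (n+1) → ZMod q) (j : ZMod q) :
    baseP q b t n (δ, f) (none, j) = none ↔
      ¬(δ.val * b + 1 ≤ ((∑ k, f k) - j).val ∧ ((∑ k, f k) - j).val ≤ δ.val * b + b) := by
  rw [baseP]
  split_ifs with h <;> simp [h] <;> omega

lemma baseP_some1 {q b t n : ℕ} [NeZero q]
    {δ : Fin t} {f : Fin (n+1) → ZMod q} {i : Fin (n+1)} {j : ZMod q}
    {e : Fin (n+1) → ZMod q} {u : Fin b}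
    (h : baseP q b t n (δ, f) (some i, j) = some (e, u)) :
    j = e i + ((δ.val * b : ℕ) : ZMod q) ∧
    f i = e i + ((δ.val * b : ℕ) : ZMod q) - (((t-1)*b + 1 + u.val : ℕ) : ZMod q) ∧
    (∀ k, k ≠ i → f k = e k) := by
  rw [baseP] at h
  split_ifs at h with hc
  rw [Option.some.injEq, Prod.mk.injEq] at h
  obtain ⟨he, hu⟩ := h
  have huval : u.val = (j - f i).val - ((t-1)*b + 1) := by rw [← hu]
  have hd : (j - f i).val = (t-1)*b + 1 + u.val := by omega
  have hji : j - f i = (((t-1)*b + 1 + u.val : ℕ) : ZMod q) := by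
    rw [← hd]; exact (ZMod.natCast_rightInverse (j - f i)).symm
  have hfi : f i = j - (((t-1)*b + 1 + u.val : ℕ) : ZMod q) := by
    rw [← hji]; ring
  have hei : e i = j - ((δ.val * b : ℕ) : ZMod q) := by
    rw [← he]; simp
  refine ⟨by rw [hei]; ring, by rw [hfi, hei]; ring, fun k hk => ?_⟩
  rw [← he, Function.update_of_ne hk]

lemma baseP_some2 {q b t n : ℕ} [NeZero q]
    {δ : Fin t} {f : Fin (n+1) → ZMod q} {j : ZMod q}
    {e : Fin (n+1) → ZMod q} {u : Fin b}
    (h : baseP q b t n (δ, f) (none, j) = some (e, u)) :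
    f = e ∧ j = (∑ k, e k) - ((δ.val * b + 1 + u.val : ℕ) : ZMod q) := by
  rw [baseP] at h
  split_ifs at h with hc
  rw [Option.some.injEq, Prod.mk.injEq] at h
  obtain ⟨he, hu⟩ := h
  have huval : u.val = ((∑ k, f k) - j).val - (δ.val * b + 1) := by rw [← hu]
  have hd : ((∑ k, f k) - j).val = δ.val * b + 1 + u.val := by omega
  have hji : (∑ k, f k) - j = ((δ.val * b + 1 + u.val : ℕ) : ZMod q) := by
    rw [← hd]; exact (ZMod.natCast_rightInverse _).symm
  refine ⟨he, ?_⟩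
  rw [← he, eq_sub_iff_add_eq, ← eq_sub_iff_add_eq']
  exact hji.symm

end Base

section Fibers

def updEquiv (q N : ℕ) (i : Fin N) (c : ZMod q) : (Fin N → ZMod q) ≃ (Fin N → ZMod q) where
  toFun f := Function.update f i (f i + c)
  invFun f := Function.update f i (f i - c)
  left_inv f := by
    funext k
    by_cases hk : k = i
    · subst hk; simp
    · simp [Function.update_of_ne hk]
  right_inv f := by
    funext k
    by_cases hk : k = i
    · subst hk; simp
    · simp [Function.update_of_ne hk]

lemma sum_update_zmod {q N : ℕ} (f : Fin (N+1) → ZMod q) (i : Fin (N+1)) (v : ZMod q) :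
    (∑ k, Function.update f i v k) = (∑ k, f k) - f i + v := by
  rw [Finset.sum_update_of_mem (Finset.mem_univ i)]
  rw [Finset.sum_eq_sum_sdiff_singleton_add (Finset.mem_univ i) f]
  ring

lemma fiber_eval (q n : ℕ) [NeZero q] (i : Fin (n+1)) (j : ZMod q) (w : ZMod q) :
    (univ.filter fun f : Fin (n+1) → ZMod q => j - f i = w).card = q ^ n := by
  have hq0 : 0 < q := Nat.pos_of_ne_zero (NeZero.ne q)
  refine fiber_card_eq (L := fun f : Fin (n+1) → ZMod q => j - f i) ?_ (q^n) ?_ ?_ w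
  · intro c
    refine ⟨updEquiv q (n+1) i (-c), fun f => ?_⟩
    simp only [updEquiv, Equiv.coe_fn_mk, Function.update_self]
    ring
  · rw [ZMod.card]; exact hq0
  · rw [Fintype.card_fun, ZMod.card, Fintype.card_fin]
    ring

lemma fiber_sum (q n : ℕ) [NeZero q] (j : ZMod q) (w : ZMod q) :
    (univ.filter fun f : Fin (n+1) → ZMod q => (∑ k, f k) - j = w).card = q ^ n := by
  have hq0 : 0 < q := Nat.pos_of_ne_zero (NeZero.ne q)
  refine fiber_card_eq (L := fun f : Fin (n+1) → ZMod q => (∑ k, f k) - j) ?_ (q^n) ?_ ?_ w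
  · intro c
    refine ⟨updEquiv q (n+1) 0 c, fun f => ?_⟩
    simp only [updEquiv, Equiv.coe_fn_mk]
    rw [sum_update_zmod]
    ring
  · rw [ZMod.card]; exact hq0
  · rw [Fintype.card_fun, ZMod.card, Fintype.card_fin]
    ring

lemma card_filter_prod' {α β : Type*} [Fintype α] [Fintype β] [DecidableEq α]
    (P : α × β → Prop) [DecidablePred P] :
    (univ.filter P).card = ∑ a : α, (univ.filter (fun bb => P (a, bb))).card := by
  rw [Finset.card_eq_sum_card_fiberwise (f := Prod.fst) (t := univ) (fun x _ => mem_univ _)]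
  refine Finset.sum_congr rfl fun a _ => ?_
  apply Finset.card_bij (fun x _ => x.2)
  · intro x hx
    simp only [mem_filter, mem_univ, true_and] at *
    obtain ⟨hp, hfst⟩ := hx
    have : x = (a, x.2) := by rw [← hfst]
    rwa [this] at hp
  · intro x hx y hy hxy
    simp only [mem_filter, mem_univ, true_and] at hx hy
    exact Prod.ext (hx.2.trans hy.2.symm) hxy
  · intro bb hbb
    simp only [mem_filter, mem_univ, true_and] at *
    exact ⟨(a, bb), ⟨hbb, rfl⟩, rfl⟩

end Fibers

theorem base_gpda (q b t n : ℕ) [NeZero q] (hq : 2 ≤ q) (hb : 1 ≤ b)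
    (ht : 1 ≤ t) (htb : t * b ≤ q - 1) :
    GPDA (t * ((q - b) * q ^ n)) (baseP q b t n) := by
  have hq0 : 0 < q := by omega
  have hRb : (t-1)*b + b = t*b := by
    have h' : t - 1 + 1 = t := by omega
    calc (t-1)*b + b = ((t-1)+1)*b := by ring
    _ = t*b := by rw [h']
  have hδb : ∀ δ : Fin t, δ.val * b ≤ (t-1)*b :=
    fun δ => Nat.mul_le_mul_right _ (by omega)
  refine ⟨?_, ?_, ?_⟩
  · -- C1
    rintro ⟨c, j⟩
    cases c with
    | some i =>
      have h1 : (univ.filter fun x : Fin t × (Fin (n+1) → ZMod q) =>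
          baseP q b t n x (some i, j) = none)
          = univ.filter (fun x : Fin t × (Fin (n+1) → ZMod q) =>
            ¬((t-1)*b + 1 ≤ (j - x.2 i).val ∧ (j - x.2 i).val ≤ (t-1)*b + b)) := by
        apply Finset.filter_congr
        rintro ⟨δ, f⟩ _
        exact baseP_none1 δ f i j
      rw [h1, card_filter_prod' (fun x : Fin t × (Fin (n+1) → ZMod q) =>
            ¬((t-1)*b + 1 ≤ (j - x.2 i).val ∧ (j - x.2 i).val ≤ (t-1)*b + b))]
      have per : (univ.filter (fun f : Fin (n+1) → ZMod q =>
          ¬((t-1)*b + 1 ≤ (j - f i).val ∧ (j - f i).val ≤ (t-1)*b + b))).card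
          = q^n * (q - b) := by
        rw [card_filter_comp (fun f : Fin (n+1) → ZMod q => j - f i) (q^n)
          (fun w => fiber_eval q n i j w)
          (fun w : ZMod q => ¬((t-1)*b + 1 ≤ w.val ∧ w.val ≤ (t-1)*b + b))]
        rw [window_card_neg q ((t-1)*b) b (by omega)]
      rw [Finset.sum_congr rfl (fun δ _ => per), Finset.sum_const, Finset.card_univ,
        Fintype.card_fin, smul_eq_mul]
      ring
    | none =>
      have h1 : (univ.filter fun x : Fin t × (Fin (n+1) → ZMod q) =>
          baseP q b t n x (none, j) = none)
          = univ.filter (fun x : Fin t × (Fin (n+1) → ZMod q) =>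
            ¬(x.1.val * b + 1 ≤ ((∑ k, x.2 k) - j).val ∧
              ((∑ k, x.2 k) - j).val ≤ x.1.val * b + b)) := by
        apply Finset.filter_congr
        rintro ⟨δ, f⟩ _
        exact baseP_none2 δ f j
      rw [h1, card_filter_prod' (fun x : Fin t × (Fin (n+1) → ZMod q) =>
            ¬(x.1.val * b + 1 ≤ ((∑ k, x.2 k) - j).val ∧
              ((∑ k, x.2 k) - j).val ≤ x.1.val * b + b))]
      have per : ∀ δ : Fin t, (univ.filter (fun f : Fin (n+1) → ZMod q =>
          ¬(δ.val * b + 1 ≤ ((∑ k, f k) - j).val ∧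
            ((∑ k, f k) - j).val ≤ δ.val * b + b))).card = q^n * (q - b) := by
        intro δ
        rw [card_filter_comp (fun f : Fin (n+1) → ZMod q => (∑ k, f k) - j) (q^n)
          (fun w => fiber_sum q n j w)
          (fun w : ZMod q => ¬(δ.val * b + 1 ≤ w.val ∧ w.val ≤ δ.val * b + b))]
        rw [window_card_neg q (δ.val * b) b (by have := hδb δ; omega)]
      rw [Finset.sum_congr rfl (fun δ _ => per δ), Finset.sum_const, Finset.card_univ,
        Fintype.card_fin, smul_eq_mul]
      ring
  · -- C2
    rintro ⟨e, u⟩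
    have hub : u.val < b := u.isLt
    refine ⟨(⟨0, by omega⟩, e), (none, (∑ k, e k) - ((u.val + 1 : ℕ) : ZMod q)), ?_⟩
    rw [baseP]
    have hval : ((∑ k, e k) - ((∑ k, e k) - ((u.val + 1 : ℕ) : ZMod q))).val = u.val + 1 := by
      rw [sub_sub_cancel]; exact ZMod.val_cast_of_lt (by omega)
    split_ifs with hcond
    · simp only [Option.some.injEq, Prod.mk.injEq, eq_self_iff_true, true_and]
      apply Fin.ext
      simp only [hval]
      show u.val + 1 - (0 * b + 1) = u.val
      omega
    · exfalso
      apply hcond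
      rw [hval]
      simp only []
      show 0 * b + 1 ≤ u.val + 1 ∧ u.val + 1 ≤ 0 * b + b
      omega
  · -- C3
    rintro ⟨δ₁, f₁⟩ ⟨c₁, j₁⟩ ⟨δ₂, f₂⟩ ⟨c₂, j₂⟩ ⟨e, u⟩ hne h1 h2
    have hub : u.val < b := u.isLt
    have castinj : ∀ X Y : ℕ, X < q → Y < q → ((X : ZMod q) = (Y : ZMod q)) → X = Y := by
      intro X Y hX hY hXY
      rw [← ZMod.val_cast_of_lt (n := q) hX, ← ZMod.val_cast_of_lt (n := q) hY, hXY]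
    have hmono : ∀ δ δ' : Fin t, δ.val < δ'.val → δ.val * b + b ≤ δ'.val * b := by
      intro δ δ' hlt
      calc δ.val*b + b = (δ.val+1)*b := by ring
      _ ≤ δ'.val*b := Nat.mul_le_mul_right _ (by omega)
    have hd1 := hδb δ₁
    have hd2 := hδb δ₂
    cases c₁ with
    | some i₁ =>
      cases c₂ with
      | some i₂ =>
        obtain ⟨hj₁, hfi₁, hfk₁⟩ := baseP_some1 h1
        obtain ⟨hj₂, hfi₂, hfk₂⟩ := baseP_some1 h2
        by_cases hii : i₁ = i₂
        · subst hii
          by_cases hδδ : δ₁ = δ₂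
          · exfalso
            apply hne
            subst hδδ
            have hf : f₁ = f₂ := by
              funext k
              by_cases hk : k = i₁
              · subst hk; rw [hfi₁, hfi₂]
              · rw [hfk₁ k hk, hfk₂ k hk]
            rw [hf, hj₁, hj₂]
          · have hδv : δ₁.val ≠ δ₂.val := fun hc => hδδ (Fin.ext hc)
            have hvne : δ₁.val * b ≠ δ₂.val * b := by
              intro hc
              exact hδv (Nat.eq_of_mul_eq_mul_right (by omega) hc)
            refine ⟨fun hc => hδδ (congrArg Prod.fst hc), ?_, ?_, ?_⟩
            · intro hc
              have hjj : j₁ = j₂ := congrArg Prod.snd hc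
              rw [hj₁, hj₂] at hjj
              exact hvne (castinj _ _ (by omega) (by omega) (add_left_cancel hjj))
            · rw [baseP_none1]
              have hdiff : j₂ - f₁ i₁ = (((t-1)*b + 1 + u.val + δ₂.val*b : ℕ) : ZMod q)
                  - ((δ₁.val*b : ℕ) : ZMod q) := by
                rw [hj₂, hfi₁]; push_cast; ring
              rw [hdiff, val_cast_sub_cast q _ _ (by omega),
                nat_mod_three _ _ hq0 (by omega)]
              rcases Nat.lt_trichotomy δ₁.val δ₂.val with hlt | heq | hgt
              · have := hmono δ₁ δ₂ hlt; split_ifs <;> omega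
              · exact absurd heq hδv
              · have := hmono δ₂ δ₁ hgt; split_ifs <;> omega
            · rw [baseP_none1]
              have hdiff : j₁ - f₂ i₁ = (((t-1)*b + 1 + u.val + δ₁.val*b : ℕ) : ZMod q)
                  - ((δ₂.val*b : ℕ) : ZMod q) := by
                rw [hj₁, hfi₂]; push_cast; ring
              rw [hdiff, val_cast_sub_cast q _ _ (by omega),
                nat_mod_three _ _ hq0 (by omega)]
              rcases Nat.lt_trichotomy δ₁.val δ₂.val with hlt | heq | hgt
              · have := hmono δ₁ δ₂ hlt; split_ifs <;> omega
              · exact absurd heq hδv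
              · have := hmono δ₂ δ₁ hgt; split_ifs <;> omega
        · -- i₁ ≠ i₂
          have hf1i2 : f₁ i₂ = e i₂ := hfk₁ i₂ (fun hc => hii hc.symm)
          have hf2i1 : f₂ i₁ = e i₁ := hfk₂ i₁ hii
          refine ⟨?_, fun hc => hii (Option.some.inj (congrArg Prod.fst hc)), ?_, ?_⟩
          · by_cases hδδ : δ₁ = δ₂
            · intro hc
              have hff : f₁ = f₂ := congrArg Prod.snd hc
              have h1' := hfi₁
              rw [hff, hf2i1] at h1'
              have h3' : ((δ₁.val*b : ℕ) : ZMod q) = (((t-1)*b+1+u.val : ℕ) : ZMod q) := by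
                linear_combination -h1'
              have := castinj _ _ (by omega) (by omega) h3'
              omega
            · exact fun hc => hδδ (congrArg Prod.fst hc)
          · rw [baseP_none1, hj₂, hf1i2]
            rw [show e i₂ + ((δ₂.val*b : ℕ) : ZMod q) - e i₂ = ((δ₂.val*b : ℕ) : ZMod q)
              from by ring]
            rw [ZMod.val_cast_of_lt (by omega)]
            omega
          · rw [baseP_none1, hj₁, hf2i1]
            rw [show e i₁ + ((δ₁.val*b : ℕ) : ZMod q) - e i₁ = ((δ₁.val*b : ℕ) : ZMod q)
              from by ring]
            rw [ZMod.val_cast_of_lt (by omega)]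
            omega
      | none =>
        obtain ⟨hj₁, hfi₁, hfk₁⟩ := baseP_some1 h1
        obtain ⟨hfe₂, hj₂⟩ := baseP_some2 h2
        have hXYne : ((δ₁.val*b : ℕ) : ZMod q) ≠ (((t-1)*b+1+u.val : ℕ) : ZMod q) := by
          intro hc
          have := castinj _ _ (by omega) (by omega) hc
          omega
        have hsum : (∑ k, f₁ k) = (∑ k, e k) + ((δ₁.val*b : ℕ) : ZMod q)
            - (((t-1)*b+1+u.val : ℕ) : ZMod q) := by
          have hupd : f₁ = Function.update e i₁
              (e i₁ + ((δ₁.val*b : ℕ) : ZMod q) - (((t-1)*b+1+u.val : ℕ) : ZMod q)) := by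
            funext k
            by_cases hk : k = i₁
            · subst hk; rw [Function.update_self]; exact hfi₁
            · rw [Function.update_of_ne hk]; exact hfk₁ k hk
          rw [hupd, sum_update_zmod]
          ring
        refine ⟨?_, by simp, ?_, ?_⟩
        · intro hc
          have hff : f₁ = f₂ := congrArg Prod.snd hc
          have h1' := hfi₁
          rw [hff, hfe₂] at h1'
          exact hXYne (by linear_combination -h1')
        · rw [baseP_none2]
          have hdiff : (∑ k, f₁ k) - j₂
              = ((δ₁.val*b + (δ₂.val*b + 1 + u.val) : ℕ) : ZMod q)
                - (((t-1)*b+1+u.val : ℕ) : ZMod q) := by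
            rw [hsum, hj₂]; push_cast; ring
          rw [hdiff, val_cast_sub_cast q _ _ (by omega), nat_mod_three _ _ hq0 (by omega)]
          split_ifs <;> omega
        · rw [baseP_none1, hfe₂, hj₁]
          rw [show e i₁ + ((δ₁.val*b : ℕ) : ZMod q) - e i₁ = ((δ₁.val*b : ℕ) : ZMod q)
            from by ring]
          rw [ZMod.val_cast_of_lt (by omega)]
          omega
    | none =>
      cases c₂ with
      | some i₂ =>
        obtain ⟨hfe₁, hj₁⟩ := baseP_some2 h1
        obtain ⟨hj₂, hfi₂, hfk₂⟩ := baseP_some1 h2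
        have hXYne : ((δ₂.val*b : ℕ) : ZMod q) ≠ (((t-1)*b+1+u.val : ℕ) : ZMod q) := by
          intro hc
          have := castinj _ _ (by omega) (by omega) hc
          omega
        have hsum : (∑ k, f₂ k) = (∑ k, e k) + ((δ₂.val*b : ℕ) : ZMod q)
            - (((t-1)*b+1+u.val : ℕ) : ZMod q) := by
          have hupd : f₂ = Function.update e i₂
              (e i₂ + ((δ₂.val*b : ℕ) : ZMod q) - (((t-1)*b+1+u.val : ℕ) : ZMod q)) := by
            funext k
            by_cases hk : k = i₂
            · subst hk; rw [Function.update_self]; exact hfi₂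
            · rw [Function.update_of_ne hk]; exact hfk₂ k hk
          rw [hupd, sum_update_zmod]
          ring
        refine ⟨?_, by simp, ?_, ?_⟩
        · intro hc
          have hff : f₁ = f₂ := congrArg Prod.snd hc
          have h1' := hfi₂
          rw [← hff, hfe₁] at h1'
          exact hXYne (by linear_combination -h1')
        · rw [baseP_none1, hfe₁, hj₂]
          rw [show e i₂ + ((δ₂.val*b : ℕ) : ZMod q) - e i₂ = ((δ₂.val*b : ℕ) : ZMod q)
            from by ring]
          rw [ZMod.val_cast_of_lt (by omega)]
          omega
        · rw [baseP_none2]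
          have hdiff : (∑ k, f₂ k) - j₁
              = ((δ₂.val*b + (δ₁.val*b + 1 + u.val) : ℕ) : ZMod q)
                - (((t-1)*b+1+u.val : ℕ) : ZMod q) := by
            rw [hsum, hj₁]; push_cast; ring
          rw [hdiff, val_cast_sub_cast q _ _ (by omega), nat_mod_three _ _ hq0 (by omega)]
          split_ifs <;> omega
      | none =>
        obtain ⟨hfe₁, hj₁⟩ := baseP_some2 h1
        obtain ⟨hfe₂, hj₂⟩ := baseP_some2 h2
        by_cases hδδ : δ₁ = δ₂
        · exfalso
          apply hne
          subst hδδ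
          have hff : f₁ = f₂ := hfe₁.trans hfe₂.symm
          rw [hff, hj₁, hj₂, hfe₂]
        · have hδv : δ₁.val ≠ δ₂.val := fun hc => hδδ (Fin.ext hc)
          have hvne : δ₁.val * b ≠ δ₂.val * b := by
            intro hc
            exact hδv (Nat.eq_of_mul_eq_mul_right (by omega) hc)
          refine ⟨fun hc => hδδ (congrArg Prod.fst hc), ?_, ?_, ?_⟩
          · intro hc
            have hjj : j₁ = j₂ := congrArg Prod.snd hc
            rw [hj₁, hj₂] at hjj
            have h' : ((δ₁.val*b + 1 + u.val : ℕ) : ZMod q)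
                = ((δ₂.val*b + 1 + u.val : ℕ) : ZMod q) := by
              linear_combination -hjj
            have := castinj _ _ (by omega) (by omega) h'
            omega
          · rw [baseP_none2, hfe₁, hj₂, sub_sub_cancel,
              ZMod.val_cast_of_lt (by omega)]
            rcases Nat.lt_trichotomy δ₁.val δ₂.val with hlt | heq | hgt
            · have := hmono δ₁ δ₂ hlt; omega
            · exact absurd heq hδv
            · have := hmono δ₂ δ₁ hgt; omega
          · rw [baseP_none2, hfe₂, hj₁, sub_sub_cancel,
              ZMod.val_cast_of_lt (by omega)]
            rcases Nat.lt_trichotomy δ₁.val δ₂.val with hlt | heq | hgt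
            · have := hmono δ₁ δ₂ hlt; omega
            · exact absurd heq hδv
            · have := hmono δ₂ δ₁ hgt; omega

section Recur

def cIdx (K1 K2 : ℕ) (r k : ℕ) : ℕ := if k < K1 then k else (k - K1 + r * K2) % K1

def iotaIdx (g h1 h2 : ℕ) (r c : ℕ) : ℕ := (c / g + h1 * h2 - r * h2) % h1

def oIdx (K1 g h1 h2 : ℕ) (r k : ℕ) : ℕ :=
  if k < K1 then
    (if iotaIdx g h1 h2 r k < h2 then h1 + iotaIdx g h1 h2 r k else r)
  else r

lemma cIdx_lt {K1 K2 : ℕ} (hK1 : 0 < K1) (r k : ℕ) :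
    cIdx K1 K2 r k < K1 := by
  unfold cIdx; split
  · assumption
  · exact Nat.mod_lt _ hK1

lemma cIdx_low {K1 K2 r k : ℕ} (h : k < K1) : cIdx K1 K2 r k = k := if_pos h

lemma cIdx_high {K1 K2 r k : ℕ} (h : ¬ k < K1) :
    cIdx K1 K2 r k = (k - K1 + r * K2) % K1 := if_neg h

lemma oIdx_lt {K1 g h1 h2 : ℕ} (r k : ℕ) (hr : r < h1) :
    oIdx K1 g h1 h2 r k < h1 + h2 := by
  unfold oIdx
  split_ifs with hk hι
  · omega
  · omega
  · omega

lemma oIdx_small {K1 g h1 h2 : ℕ} (r k : ℕ) (h : oIdx K1 g h1 h2 r k < h1) :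
    oIdx K1 g h1 h2 r k = r := by
  unfold oIdx at h ⊢
  split_ifs at h ⊢ with h1' h2'
  · omega
  · rfl
  · rfl

lemma oIdx_large {K1 g h1 h2 : ℕ} (r k : ℕ) (hr : r < h1) (h : h1 ≤ oIdx K1 g h1 h2 r k) :
    k < K1 ∧ iotaIdx g h1 h2 r k < h2 ∧ oIdx K1 g h1 h2 r k = h1 + iotaIdx g h1 h2 r k := by
  unfold oIdx at h ⊢
  split_ifs at h ⊢ with h1' h2'
  · exact ⟨h1', h2', rfl⟩
  · exact absurd h (by omega)
  · exact absurd h (by omega)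

lemma dec_lemma {g h1 h2 K1 K2 : ℕ} (hg : 0 < g) (hh1 : 0 < h1)
    (hK1 : K1 = g * h1) (hK2 : K2 = g * h2) (r c : ℕ) (hr : r ≤ h1) :
    (c + h1 * K2 - r * K2) % K1 = g * iotaIdx g h1 h2 r c + c % g := by
  unfold iotaIdx
  have e0 : g * (c / g) + c % g = c := Nat.div_add_mod c g
  have h12 : c % g < g := Nat.mod_lt c hg
  obtain ⟨D, hD⟩ := Nat.le.dest (Nat.mul_le_mul_right h2 hr)
  generalize hG : c / g = Cg at e0 ⊢
  have e3 : Cg + h1 * h2 - r * h2 = Cg + D := by omega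
  rw [e3]
  have hstep : c + h1 * K2 - r * K2 = g * (Cg + D) + c % g := by
    have f1 : h1 * K2 = r * K2 + g * D := by
      rw [hK2]
      calc h1 * (g*h2) = g * (h1*h2) := by ring
      _ = g * (r*h2 + D) := by rw [hD]
      _ = r * (g*h2) + g * D := by ring
    have f2 : g * (Cg + D) = g * Cg + g * D := Nat.mul_add g _ _
    have f6 : r * K2 ≤ h1 * K2 := Nat.mul_le_mul_right _ hr
    omega
  rw [hstep]
  set X := Cg + D with hXdef
  have e7 : h1 * (X / h1) + X % h1 = X := Nat.div_add_mod X h1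
  have f4 : g * X = (g * h1) * (X / h1) + g * (X % h1) := by
    calc g * X = g * (h1 * (X / h1) + X % h1) := by rw [e7]
    _ = (g * h1) * (X / h1) + g * (X % h1) := by ring
  have f5 : g * X + c % g = (g * h1) * (X / h1) + (g * (X % h1) + c % g) := by omega
  rw [hK1, f5, Nat.mul_add_mod]
  apply Nat.mod_eq_of_lt
  have h9 : X % h1 ≤ h1 - 1 := by have := Nat.mod_lt X hh1; omega
  have h10 : g * (X % h1) ≤ g * (h1 - 1) := Nat.mul_le_mul_left _ h9
  have h11 : g * (h1 - 1) + g = g * h1 := by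
    have e : h1 - 1 + 1 = h1 := by omega
    calc g * (h1-1) + g = g * ((h1-1)+1) := by ring
    _ = g * h1 := by rw [e]
  omega

lemma glt_iff {g h2 K2 : ℕ} (hg : 0 < g) (hK2 : K2 = g * h2) (ι m : ℕ) (hm : m < g) :
    g * ι + m < K2 ↔ ι < h2 := by
  constructor
  · intro h
    by_contra hc
    push_neg at hc
    have : g * h2 ≤ g * ι := Nat.mul_le_mul_left _ hc
    omega
  · intro h
    have h' : ι + 1 ≤ h2 := h
    have h2' : g * (ι+1) ≤ g * h2 := Nat.mul_le_mul_left _ h'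
    have h3' : g * (ι+1) = g*ι + g := by ring
    omega

lemma inv_lemma {g h1 h2 K1 K2 : ℕ} (hK1 : K1 = g * h1) (hK2 : K2 = g * h2)
    (hK1pos : 0 < K1) (hle : h2 ≤ h1) (r a : ℕ) (hr : r ≤ h1) (ha : a < K2) :
    ((a + r * K2) % K1 + (h1 * K2 - r * K2)) % K1 = a := by
  have hrK : r * K2 ≤ h1 * K2 := Nat.mul_le_mul_right _ hr
  rw [Nat.mod_add_mod]
  have e1 : a + r * K2 + (h1 * K2 - r * K2) = a + h1 * K2 := by omega
  rw [e1]
  have e2 : h1 * K2 = h2 * K1 := by rw [hK1, hK2]; ring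
  rw [e2, Nat.add_mul_mod_self_right]
  apply Nat.mod_eq_of_lt
  have : K2 ≤ K1 := by rw [hK1, hK2]; exact Nat.mul_le_mul_left _ hle
  omega

lemma inv_lemma2 {g h1 h2 K1 K2 : ℕ} (hK1 : K1 = g * h1) (hK2 : K2 = g * h2)
    (hK1pos : 0 < K1) (r c : ℕ) (hr : r ≤ h1) (hc : c < K1) :
    ((c + h1 * K2 - r * K2) % K1 + r * K2) % K1 = c := by
  have hrK : r * K2 ≤ h1 * K2 := Nat.mul_le_mul_right _ hr
  rw [Nat.mod_add_mod]
  have e1 : c + h1 * K2 - r * K2 + r * K2 = c + h1 * K2 := by omega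
  rw [e1]
  have e2 : h1 * K2 = h2 * K1 := by rw [hK1, hK2]; ring
  rw [e2, Nat.add_mul_mod_self_right]
  exact Nat.mod_eq_of_lt hc

lemma iota_inj {g h1 h2 : ℕ} (hh1 : 0 < h1) (hco : Nat.Coprime h2 h1)
    (c : ℕ) {r1 r2 : ℕ} (hr1 : r1 < h1) (hr2 : r2 < h1)
    (h : iotaIdx g h1 h2 r1 c = iotaIdx g h1 h2 r2 c) : r1 = r2 := by
  unfold iotaIdx at h
  obtain ⟨D1, hD1⟩ := Nat.le.dest (Nat.mul_le_mul_right h2 (le_of_lt hr1))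
  obtain ⟨D2, hD2⟩ := Nat.le.dest (Nat.mul_le_mul_right h2 (le_of_lt hr2))
  generalize hG : c / g = Cg at h
  have e1 : Cg + h1*h2 - r1*h2 = Cg + D1 := by omega
  have e2 : Cg + h1*h2 - r2*h2 = Cg + D2 := by omega
  rw [e1, e2] at h
  have hmeq : (Cg + D1) ≡ (Cg + D2) [MOD h1] := h
  have hmeq2 : D1 ≡ D2 [MOD h1] := Nat.ModEq.add_left_cancel' Cg hmeq
  have hEq : r1*h2 + D1 = r2*h2 + D2 := by omega
  have m1 : r1*h2 + D1 ≡ r2*h2 + D2 [MOD h1] := by rw [hEq]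
  have m2 : r2*h2 + D2 ≡ r2*h2 + D1 [MOD h1] := Nat.ModEq.add_left _ hmeq2.symm
  have m3 : r1*h2 + D1 ≡ r2*h2 + D1 [MOD h1] := m1.trans m2
  have m4 : r1*h2 ≡ r2*h2 [MOD h1] := Nat.ModEq.add_right_cancel' D1 m3
  have m5 := Nat.ModEq.cancel_right_of_coprime (c := h2) (Nat.Coprime.symm hco) m4
  have hfin : r1 % h1 = r2 % h1 := m5
  rw [Nat.mod_eq_of_lt hr1, Nat.mod_eq_of_lt hr2] at hfin
  exact hfin

lemma iota_solve {g h1 h2 : ℕ} (hh1 : 0 < h1) (hco : Nat.Coprime h2 h1)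
    (c ι₀ : ℕ) (hι : ι₀ < h2) (hle : h2 ≤ h1) :
    ∃ r, r < h1 ∧ iotaIdx g h1 h2 r c = ι₀ := by
  haveI : NeZero h1 := ⟨by omega⟩
  set uu := ZMod.unitOfCoprime h2 hco with huu
  set w : ZMod h1 := ((c / g + h1*h2 : ℕ) : ZMod h1) - ((ι₀ : ℕ) : ZMod h1) with hw
  set v : ZMod h1 := ((uu⁻¹ : (ZMod h1)ˣ) : ZMod h1) * w with hv
  refine ⟨v.val, ZMod.val_lt v, ?_⟩
  unfold iotaIdx
  have hrle : v.val * h2 ≤ h1 * h2 := Nat.mul_le_mul_right _ (le_of_lt (ZMod.val_lt v))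
  have hu : ((uu : (ZMod h1)ˣ) : ZMod h1) = ((h2 : ℕ) : ZMod h1) :=
    ZMod.coe_unitOfCoprime h2 hco
  have hvv : ((v.val : ℕ) : ZMod h1) = v := ZMod.natCast_rightInverse v
  have hcast : ((c / g + h1*h2 - v.val * h2 : ℕ) : ZMod h1) = ((ι₀ : ℕ) : ZMod h1) := by
    rw [Nat.cast_sub (le_trans hrle (Nat.le_add_left _ _))]
    rw [Nat.cast_mul, hvv, hv]
    rw [show ((uu⁻¹ : (ZMod h1)ˣ) : ZMod h1) * w * ((h2:ℕ) : ZMod h1)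
        = w * (((uu⁻¹ : (ZMod h1)ˣ) : ZMod h1) * ((uu : (ZMod h1)ˣ) : ZMod h1)) from by
      rw [hu]; ring]
    rw [← Units.val_mul, inv_mul_cancel, Units.val_one, mul_one, hw]
    ring
  have hval := congrArg ZMod.val hcast
  rw [ZMod.val_natCast, ZMod.val_natCast] at hval
  rw [hval]
  exact Nat.mod_eq_of_lt (by omega)

def recP {R Sym : Type*} (K1 K2 g h1 h2 : ℕ) (hK1pos : 0 < K1)
    (P : R → Fin K1 → Option Sym) (x : Fin h1 × R) (k : Fin (K1+K2)) :
    Option (Sym × Fin (h1+h2)) :=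
  (P x.2 ⟨cIdx K1 K2 x.1.val k.val, cIdx_lt hK1pos _ _⟩).map
    (fun s => (s, ⟨oIdx K1 g h1 h2 x.1.val k.val, oIdx_lt _ _ x.1.isLt⟩))

end Recur

theorem rec_gpda {R Sym : Type*} [Fintype R] [DecidableEq Sym]
    (K1 K2 g h1 h2 Z : ℕ) (hg : 0 < g) (hh1 : 0 < h1) (hh2 : 0 < h2)
    (hK1 : K1 = g * h1) (hK2 : K2 = g * h2) (hco : Nat.Coprime h2 h1) (hle : h2 ≤ h1)
    (hK1pos : 0 < K1)
    (P : R → Fin K1 → Option Sym) (hP : GPDA Z P) :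
    GPDA (h1 * Z) (recP K1 K2 g h1 h2 hK1pos P) := by
  obtain ⟨hC1, hC2, hC3⟩ := hP
  have hK2K1 : K2 ≤ K1 := by rw [hK1, hK2]; exact Nat.mul_le_mul_left _ hle
  refine ⟨?_, ?_, ?_⟩
  · -- C1
    intro k
    have h1eq : (univ.filter fun x : Fin h1 × R => recP K1 K2 g h1 h2 hK1pos P x k = none)
        = univ.filter (fun x : Fin h1 × R =>
            P x.2 ⟨cIdx K1 K2 x.1.val k.val, cIdx_lt hK1pos _ _⟩ = none) := by
      apply Finset.filter_congr
      intro x _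
      exact Option.map_eq_none_iff
    rw [h1eq, card_filter_prod' (fun x : Fin h1 × R =>
        P x.2 ⟨cIdx K1 K2 x.1.val k.val, cIdx_lt hK1pos _ _⟩ = none)]
    rw [Finset.sum_congr rfl (fun r _ =>
      hC1 ⟨cIdx K1 K2 r.val k.val, cIdx_lt hK1pos _ _⟩)]
    rw [Finset.sum_const, Finset.card_univ, Fintype.card_fin, smul_eq_mul]
  · -- C2
    rintro ⟨s, o⟩
    obtain ⟨x, c, hxc⟩ := hC2 s
    have hov : o.val < h1 + h2 := o.isLt
    have key : ∀ (r : Fin h1) (k : Fin (K1+K2)),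
        cIdx K1 K2 r.val k.val = c.val → oIdx K1 g h1 h2 r.val k.val = o.val →
        recP K1 K2 g h1 h2 hK1pos P (r, x) k = some (s, o) := by
      intro r k hc hoo
      unfold recP
      have hcf : (⟨cIdx K1 K2 r.val k.val, cIdx_lt hK1pos _ _⟩ : Fin K1) = c := Fin.ext hc
      rw [hcf, hxc]
      simp only [Option.map_some]
      exact congrArg some (Prod.ext rfl (Fin.ext hoo))
    by_cases ho : o.val < h1
    · by_cases hι : iotaIdx g h1 h2 o.val c.val < h2
      · -- B-cell
        obtain ⟨k', hk'⟩ : ∃ k', k' = (c.val + h1 * K2 - o.val * K2) % K1 := ⟨_, rfl⟩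
        have hdec := dec_lemma hg hh1 hK1 hK2 o.val c.val (by omega)
        have hk'lt : k' < K2 := by
          rw [hk', hdec]
          exact (glt_iff hg hK2 _ _ (Nat.mod_lt _ hg)).mpr hι
        refine ⟨(⟨o.val, ho⟩, x), ⟨K1 + k', by omega⟩, key _ _ ?_ ?_⟩
        · show cIdx K1 K2 o.val (K1 + k') = c.val
          rw [cIdx_high (by omega)]
          have e1 : K1 + k' - K1 = k' := by omega
          rw [e1, hk']
          exact inv_lemma2 hK1 hK2 hK1pos o.val c.val (by omega) c.isLt
        · show oIdx K1 g h1 h2 o.val (K1 + k') = o.val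
          unfold oIdx
          rw [if_neg (by omega)]
      · -- A-cell with o < h1
        refine ⟨(⟨o.val, ho⟩, x), ⟨c.val, by have := c.isLt; omega⟩, key _ _ ?_ ?_⟩
        · show cIdx K1 K2 o.val c.val = c.val
          exact cIdx_low c.isLt
        · show oIdx K1 g h1 h2 o.val c.val = o.val
          unfold oIdx
          rw [if_pos c.isLt, if_neg hι]
    · -- o ≥ h1
      obtain ⟨r, hr, hreq⟩ := iota_solve (g := g) hh1 hco c.val (o.val - h1) (by omega) hle
      refine ⟨(⟨r, hr⟩, x), ⟨c.val, by have := c.isLt; omega⟩, key _ _ ?_ ?_⟩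
      · show cIdx K1 K2 r c.val = c.val
        exact cIdx_low c.isLt
      · show oIdx K1 g h1 h2 r c.val = o.val
        unfold oIdx
        rw [if_pos c.isLt, if_pos (show iotaIdx g h1 h2 r c.val < h2 by omega)]
        omega
  · -- C3
    rintro ⟨r1, x1⟩ k1 ⟨r2, x2⟩ k2 ⟨s, o⟩ hne hp1 hp2
    unfold recP at hp1 hp2
    rw [Option.map_eq_some_iff] at hp1 hp2
    obtain ⟨s1, hs1, hs1'⟩ := hp1
    obtain ⟨s2, hs2, hs2'⟩ := hp2
    have hss1 : s1 = s := congrArg Prod.fst hs1'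
    have hss2 : s2 = s := congrArg Prod.fst hs2'
    rw [hss1] at hs1
    rw [hss2] at hs2
    have hk1lt := k1.isLt
    have hk2lt := k2.isLt
    have hr1lt := r1.isLt
    have hr2lt := r2.isLt
    have ho1 : oIdx K1 g h1 h2 r1.val k1.val = o.val := by
      have := congrArg Prod.snd hs1'
      exact congrArg Fin.val this
    have ho2 : oIdx K1 g h1 h2 r2.val k2.val = o.val := by
      have := congrArg Prod.snd hs2'
      exact congrArg Fin.val this
    by_cases hrr : r1 = r2
    · by_cases hkk : k1 = k2
      · -- same block, same column: must have x1 ≠ x2, contradiction via original C3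
        exfalso
        have hx : x1 ≠ x2 := by
          intro hx
          exact hne (by rw [hrr, hx, hkk])
        obtain ⟨_, hkne, _, _⟩ := hC3 x1 ⟨cIdx K1 K2 r1.val k1.val, cIdx_lt hK1pos _ _⟩
          x2 ⟨cIdx K1 K2 r2.val k2.val, cIdx_lt hK1pos _ _⟩ s
          (by intro hcon; exact hx (congrArg Prod.fst hcon)) hs1 hs2
        exact hkne (Fin.ext (by rw [hrr, hkk]))
      · -- same block, different new columns
        by_cases hcc : cIdx K1 K2 r1.val k1.val = cIdx K1 K2 r2.val k2.val
        · -- mutual exclusion: impossible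
          exfalso
          have hkv : k1.val ≠ k2.val := fun hc => hkk (Fin.ext hc)
          have hrv : r1.val = r2.val := congrArg Fin.val hrr
          by_cases hk1K : k1.val < K1
          · by_cases hk2K : k2.val < K1
            · rw [cIdx_low hk1K, cIdx_low hk2K] at hcc
              exact hkv hcc
            · -- k1 A-cell, k2 B-cell
              -- o.val = r2.val (from ho2, oIdx with k2 ≥ K1)
              have ho2' : oIdx K1 g h1 h2 r2.val k2.val = r2.val := by
                unfold oIdx; rw [if_neg hk2K]
              have hoval : o.val = r2.val := by omega
              -- then oIdx r1 k1 = o.val = r1.val < h1, so iota ≥ h2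
              have hι1 : ¬ (iotaIdx g h1 h2 r1.val k1.val < h2) := by
                intro hι
                have : oIdx K1 g h1 h2 r1.val k1.val = h1 + iotaIdx g h1 h2 r1.val k1.val := by
                  unfold oIdx; rw [if_pos hk1K, if_pos hι]
                have hrlt := r1.isLt
                omega
              -- c2 = (k2 - K1 + r2*K2) % K1 = cIdx r1 k1 = k1.val
              rw [cIdx_low hk1K, cIdx_high hk2K] at hcc
              -- invert: k2.val - K1 = (k1.val + h1K2 - r2K2) % K1 = g*iota(r2,k1) + k1%g
              have hinv := inv_lemma hK1 hK2 hK1pos hle r2.val (k2.val - K1)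
                (by omega) (by omega)
              rw [← hcc] at hinv
              have hdec := dec_lemma hg hh1 hK1 hK2 r2.val k1.val (by omega)
              have hrK : r2.val * K2 ≤ h1 * K2 := Nat.mul_le_mul_right _ (by omega)
              have heq2 : k1.val + (h1 * K2 - r2.val * K2) = k1.val + h1*K2 - r2.val*K2 := by
                omega
              rw [heq2, hdec] at hinv
              have hlt2 : g * iotaIdx g h1 h2 r2.val k1.val + k1.val % g < K2 := by
                rw [hinv]; omega
              have hιlt : iotaIdx g h1 h2 r2.val k1.val < h2 :=
                (glt_iff hg hK2 _ _ (Nat.mod_lt _ hg)).mp hlt2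
              rw [← hrv] at hιlt
              exact hι1 hιlt
          · by_cases hk2K : k2.val < K1
            · -- symmetric: k2 A-cell, k1 B-cell
              have ho1' : oIdx K1 g h1 h2 r1.val k1.val = r1.val := by
                unfold oIdx; rw [if_neg hk1K]
              have hoval : o.val = r1.val := by omega
              have hι2 : ¬ (iotaIdx g h1 h2 r2.val k2.val < h2) := by
                intro hι
                have : oIdx K1 g h1 h2 r2.val k2.val = h1 + iotaIdx g h1 h2 r2.val k2.val := by
                  unfold oIdx; rw [if_pos hk2K, if_pos hι]
                have hrlt := r2.isLt
                omega
              rw [cIdx_high hk1K, cIdx_low hk2K] at hcc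
              have hinv := inv_lemma hK1 hK2 hK1pos hle r1.val (k1.val - K1)
                (by omega) (by omega)
              rw [hcc] at hinv
              have hdec := dec_lemma hg hh1 hK1 hK2 r1.val k2.val (by omega)
              have hrK : r1.val * K2 ≤ h1 * K2 := Nat.mul_le_mul_right _ (by omega)
              have heq2 : k2.val + (h1 * K2 - r1.val * K2) = k2.val + h1*K2 - r1.val*K2 := by
                omega
              rw [heq2, hdec] at hinv
              have hlt2 : g * iotaIdx g h1 h2 r1.val k2.val + k2.val % g < K2 := by
                rw [hinv]; omega
              have hιlt : iotaIdx g h1 h2 r1.val k2.val < h2 :=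
                (glt_iff hg hK2 _ _ (Nat.mod_lt _ hg)).mp hlt2
              rw [hrv] at hιlt
              exact hι2 hιlt
            · -- both B-cells
              rw [cIdx_high hk1K, cIdx_high hk2K] at hcc
              have hrv' : r1.val = r2.val := hrv
              rw [hrv'] at hcc
              have hi1 := inv_lemma hK1 hK2 hK1pos hle r2.val (k1.val - K1) (by omega) (by omega)
              have hi2 := inv_lemma hK1 hK2 hK1pos hle r2.val (k2.val - K1) (by omega) (by omega)
              rw [hcc] at hi1
              rw [hi2] at hi1
              exact hkv (by omega)
        · -- c1 ≠ c2, same block: use original C3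
          have hcell : ((x1, (⟨cIdx K1 K2 r1.val k1.val, cIdx_lt hK1pos _ _⟩ : Fin K1)) : R × Fin K1)
              ≠ (x2, ⟨cIdx K1 K2 r2.val k2.val, cIdx_lt hK1pos _ _⟩) := by
            intro hcon
            exact hcc (congrArg Fin.val (congrArg Prod.snd hcon))
          obtain ⟨hxne, hkne, hcr1, hcr2⟩ := hC3 _ _ _ _ s hcell hs1 hs2
          refine ⟨?_, hkk, ?_, ?_⟩
          · intro hcon
            exact hxne (congrArg Prod.snd hcon)
          · unfold recP
            rw [Option.map_eq_none_iff]
            have hcf : (⟨cIdx K1 K2 r1.val k2.val, cIdx_lt hK1pos _ _⟩ : Fin K1)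
                = ⟨cIdx K1 K2 r2.val k2.val, cIdx_lt hK1pos _ _⟩ := by
              apply Fin.ext
              simp only []
              rw [hrr]
            rw [hcf]
            exact hcr1
          · unfold recP
            rw [Option.map_eq_none_iff]
            have hcf : (⟨cIdx K1 K2 r2.val k1.val, cIdx_lt hK1pos _ _⟩ : Fin K1)
                = ⟨cIdx K1 K2 r1.val k1.val, cIdx_lt hK1pos _ _⟩ := by
              apply Fin.ext
              simp only []
              rw [hrr]
            rw [hcf]
            exact hcr2
    · -- r1 ≠ r2
      have hr1v : r1.val ≠ r2.val := fun hc => hrr (Fin.ext hc)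
      have hoge : h1 ≤ o.val := by
        by_contra hlt
        push_neg at hlt
        have e1 : oIdx K1 g h1 h2 r1.val k1.val = r1.val :=
          oIdx_small (K1 := K1) (g := g) (h1 := h1) (h2 := h2) r1.val k1.val (by omega)
        have e2 : oIdx K1 g h1 h2 r2.val k2.val = r2.val :=
          oIdx_small (K1 := K1) (g := g) (h1 := h1) (h2 := h2) r2.val k2.val (by omega)
        exact hr1v (by omega)
      obtain ⟨hk1K, hι1, he1⟩ := oIdx_large (K1 := K1) (g := g) (h1 := h1) (h2 := h2)
        r1.val k1.val r1.isLt (by omega)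
      obtain ⟨hk2K, hι2, he2⟩ := oIdx_large (K1 := K1) (g := g) (h1 := h1) (h2 := h2)
        r2.val k2.val r2.isLt (by omega)
      have hkv : k1.val ≠ k2.val := by
        intro hkeq
        rw [hkeq] at he1 ho1
        have hii : iotaIdx g h1 h2 r1.val k2.val = iotaIdx g h1 h2 r2.val k2.val := by
          omega
        exact hr1v (iota_inj hh1 hco _ r1.isLt r2.isLt hii)
      have hcell : ((x1, (⟨cIdx K1 K2 r1.val k1.val, cIdx_lt hK1pos _ _⟩ : Fin K1)) : R × Fin K1)
          ≠ (x2, ⟨cIdx K1 K2 r2.val k2.val, cIdx_lt hK1pos _ _⟩) := by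
        intro hcon
        have := congrArg Fin.val (congrArg Prod.snd hcon)
        simp only [] at this
        rw [cIdx_low hk1K, cIdx_low hk2K] at this
        exact hkv this
      obtain ⟨hxne, hkne, hcr1, hcr2⟩ := hC3 _ _ _ _ s hcell hs1 hs2
      refine ⟨?_, fun hcon => hkv (congrArg Fin.val hcon), ?_, ?_⟩
      · intro hcon
        exact hrr (congrArg Prod.fst hcon)
      · unfold recP
        rw [Option.map_eq_none_iff]
        have hcf : (⟨cIdx K1 K2 r1.val k2.val, cIdx_lt hK1pos _ _⟩ : Fin K1)
            = ⟨cIdx K1 K2 r2.val k2.val, cIdx_lt hK1pos _ _⟩ := by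
          apply Fin.ext
          simp only []
          rw [cIdx_low hk2K, cIdx_low hk2K]
        rw [hcf]
        exact hcr1
      · unfold recP
        rw [Option.map_eq_none_iff]
        have hcf : (⟨cIdx K1 K2 r2.val k1.val, cIdx_lt hK1pos _ _⟩ : Fin K1)
            = ⟨cIdx K1 K2 r1.val k1.val, cIdx_lt hK1pos _ _⟩ := by
          apply Fin.ext
          simp only []
          rw [cIdx_low hk1K, cIdx_low hk1K]
        rw [hcf]
        exact hcr2


theorem recursive_cheng2 (q z m K2 h1 h2 : ℕ) (hq : 2 ≤ q) (hz : 0 < z) (hzq : z < q)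
    (hm : 0 < m) (hK2 : 0 < K2) (hK2le : K2 ≤ (m + 1) * q)
    (hh1 : h1 = (m + 1) * q / Nat.gcd ((m + 1) * q) K2)
    (hh2 : h2 = K2 / Nat.gcd ((m + 1) * q) K2) :
    PDAExists ((m + 1) * q + K2) (h1 * ((q - 1) / (q - z)) * q ^ m)
      (h1 * z * ((q - 1) / (q - z)) * q ^ (m - 1)) ((h1 + h2) * (q - z) * q ^ m) := by
  haveI : NeZero q := ⟨by omega⟩
  obtain ⟨n, rfl⟩ : ∃ n, m = n + 1 := ⟨m - 1, by omega⟩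
  set b := q - z with hb
  set t := (q - 1) / b with ht
  have hb1 : 1 ≤ b := by omega
  have hbq : b ≤ q - 1 := by omega
  have ht1 : 1 ≤ t := by
    rw [ht]
    exact (Nat.one_le_div_iff (by omega)).mpr hbq
  have htb : t * b ≤ q - 1 := by
    rw [ht]
    exact Nat.div_mul_le_self _ _
  have hbase := base_gpda q b t n hq hb1 ht1 htb
  set K1 := (n + 1 + 1) * q with hK1def
  have hK1pos : 0 < K1 := by
    rw [hK1def]
    exact Nat.mul_pos (by omega) (by omega)
  have hcardC : Fintype.card (Option (Fin (n+1)) × ZMod q) = K1 := by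
    rw [Fintype.card_prod, Fintype.card_option, Fintype.card_fin, ZMod.card, hK1def]
  have hbase' := gpda_transport hbase (Equiv.refl _)
    (Fintype.equivFinOfCardEq hcardC).symm (Equiv.refl _)
  set G := Nat.gcd K1 K2 with hG
  have hGpos : 0 < G := Nat.gcd_pos_of_pos_left _ hK1pos
  have hGdvd1 : G ∣ K1 := Nat.gcd_dvd_left _ _
  have hGdvd2 : G ∣ K2 := Nat.gcd_dvd_right _ _
  have hK1eq : K1 = G * h1 := by
    rw [hh1]
    exact (Nat.mul_div_cancel' hGdvd1).symm
  have hK2eq : K2 = G * h2 := by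
    rw [hh2]
    exact (Nat.mul_div_cancel' hGdvd2).symm
  have hco : Nat.Coprime h2 h1 := by
    rw [hh1, hh2]
    exact (Nat.coprime_div_gcd_div_gcd hGpos).symm
  have hle : h2 ≤ h1 := by
    rw [hh1, hh2]
    exact Nat.div_le_div_right hK2le
  have hh1pos : 0 < h1 := by
    rw [hh1]
    exact Nat.div_pos (Nat.le_of_dvd hK1pos hGdvd1) hGpos
  have hh2pos : 0 < h2 := by
    rw [hh2]
    exact Nat.div_pos (Nat.le_of_dvd hK2 hGdvd2) hGpos
  have hrec := rec_gpda K1 K2 G h1 h2 (t * ((q - b) * q ^ n)) hGpos hh1pos hh2pos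
    hK1eq hK2eq hco hle hK1pos _ hbase'
  have hqb : q - b = z := by omega
  have main : PDAExists (K1 + K2) (h1 * (t * q ^ (n+1)))
      (h1 * (t * ((q - b) * q ^ n))) ((q ^ (n+1) * b) * (h1 + h2)) := by
    refine PDAExists.of_gpda _ hrec ?_ ?_ ?_
    · rw [Fintype.card_prod, Fintype.card_prod, Fintype.card_fin, Fintype.card_fin,
        Fintype.card_fun, ZMod.card, Fintype.card_fin]
    · rw [Fintype.card_fin]
    · rw [Fintype.card_prod, Fintype.card_prod, Fintype.card_fun, ZMod.card,
        Fintype.card_fin, Fintype.card_fin, Fintype.card_fin]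
  have e2 : h1 * t * q ^ (n+1) = h1 * (t * q ^ (n+1)) := by ring
  have e3 : h1 * z * t * q ^ (n + 1 - 1) = h1 * (t * ((q - b) * q ^ n)) := by
    rw [hqb]
    have hnn : n + 1 - 1 = n := rfl
    rw [hnn]
    ring
  have e4 : (h1 + h2) * b * q ^ (n+1) = (q ^ (n+1) * b) * (h1 + h2) := by ring
  rw [e2, e3, e4]
  exact main
end

section
/- Let q ≥ 2, m ≥ 1 be integers, K1 = (m+1)q, and K2 a positive multiple of q with K2 ≤ K1. Set n = (K1+K2)/q, d = gcd(K1,K2), h1 = K1/d, h2 = K2/d. Then the rate (1 + h2/h1)·(q−1) of the recursive PDA with memory ratio 1/q equals n(q−1)/(m+1), and h1 is the least positive integer x such that (m+1) divides n·x. -/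
theorem tang_ramamoorthy_case1 (q m K2 n d h1 h2 : ℕ) (hq : 2 ≤ q) (hm : 1 ≤ m)
    (hK2pos : 0 < K2) (hK2dvd : q ∣ K2) (hK2le : K2 ≤ (m + 1) * q)
    (hn : n = ((m + 1) * q + K2) / q) (hd : d = Nat.gcd ((m + 1) * q) K2)
    (hh1 : h1 = (m + 1) * q / d) (hh2 : h2 = K2 / d) :
    (1 + (h2 : ℚ) / (h1 : ℚ)) * ((q : ℚ) - 1) =
      (n : ℚ) * ((q : ℚ) - 1) / ((m : ℚ) + 1) ∧
    IsLeast {x : ℕ | 0 < x ∧ (m + 1) ∣ n * x} h1 := by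
  obtain ⟨k, hk⟩ := hK2dvd
  have hq0 : 0 < q := by omega
  have hk0 : 0 < k := by
    rcases Nat.eq_zero_or_pos k with h | h
    · simp [h] at hk; omega
    · exact h
  set g := Nat.gcd (m + 1) k with hg
  have hg0 : 0 < g := Nat.gcd_pos_of_pos_left _ (by omega)
  have hgm : g ∣ (m + 1) := Nat.gcd_dvd_left _ _
  have hgk : g ∣ k := Nat.gcd_dvd_right _ _
  have hd' : d = q * g := by
    rw [hd, hk, mul_comm (m + 1) q, Nat.gcd_mul_left]
  have hh1' : h1 = (m + 1) / g := by
    rw [hh1, hd', mul_comm (m + 1) q, Nat.mul_div_mul_left _ _ hq0]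
  have hh2' : h2 = k / g := by
    rw [hh2, hd', hk, Nat.mul_div_mul_left _ _ hq0]
  have hm1 : m + 1 = g * h1 := by
    rw [hh1', Nat.mul_div_cancel' hgm]
  have hk1 : k = g * h2 := by
    rw [hh2', Nat.mul_div_cancel' hgk]
  have hn' : n = (m + 1) + k := by
    rw [hn, hk, mul_comm (m + 1) q, ← Nat.mul_add, Nat.mul_div_cancel_left _ hq0]
  have hh1pos : 0 < h1 := by
    rcases Nat.eq_zero_or_pos h1 with h | h
    · rw [h, mul_zero] at hm1; omega
    · exact h
  have hcop : Nat.Coprime h1 h2 := by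
    rw [hh1', hh2']
    exact Nat.coprime_div_gcd_div_gcd hg0
  constructor
  · have e1 : ((m : ℚ) + 1) = (g : ℚ) * (h1 : ℚ) := by
      have := congrArg (Nat.cast : ℕ → ℚ) hm1
      push_cast at this; linarith
    have e2 : (n : ℚ) = (g : ℚ) * (h1 : ℚ) + (g : ℚ) * (h2 : ℚ) := by
      have := congrArg (Nat.cast : ℕ → ℚ) (by rw [hn', hm1, hk1] : n = g * h1 + g * h2)
      push_cast at this; linarith
    have h1ne : (h1 : ℚ) ≠ 0 := Nat.cast_ne_zero.2 hh1pos.ne'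
    have gne : (g : ℚ) ≠ 0 := Nat.cast_ne_zero.2 hg0.ne'
    rw [e1, e2]
    field_simp
  · constructor
    · refine ⟨hh1pos, ?_⟩
      rw [hn', add_mul]
      refine dvd_add ⟨h1, rfl⟩ ?_
      rw [hm1, hk1]
      exact ⟨h2, by ring⟩
    · rintro x ⟨hx0, hxd⟩
      rw [hn', add_mul] at hxd
      have h2x : (m + 1) ∣ k * x := (Nat.dvd_add_right ⟨x, rfl⟩).mp hxd
      rw [hm1, hk1, mul_assoc] at h2x
      have : h1 ∣ h2 * x := (mul_dvd_mul_iff_left hg0.ne').mp h2x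
      exact Nat.le_of_dvd hx0 (hcop.dvd_of_dvd_mul_left this)
end
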